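/- arXiv:2003.13100 — 3 statements merged into one kernel-verified Lean document; each statement's English description precedes it below -/
import Mathlib

section
/- Let f(x) ∈ ℤ[x] be a primitive irreducible polynomial of degree greater than one. Then there is a constant C (depending only on f) such that for all positive integers n and all nonzero integers h, Σ_{a=1}^{n} |S(ah; n)|² ≤ C · r(n) · n · gcd(h, n). -/
open Polynomial Finset Filter
open scoped Classical

/-- `e x = e^{2πix}`. -/
noncomputable def e (x : ℝ) : ℂ := Complex.exp (2 * Real.pi * Complex.I * x)

/-- `rootCount f n` is the number of residues `μ` with `0 ≤ μ < n` and `f(μ) ≡ 0 (mod n)`. -/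
noncomputable def rootCount (f : Polynomial ℤ) (n : ℕ) : ℕ :=
  ((Finset.range n).filter (fun μ => (n : ℤ) ∣ f.eval (μ : ℤ))).card

/-- `expSum f h n = S(h;n) = ∑_{0 ≤ μ < n, f(μ) ≡ 0 (n)} e(hμ/n)`. -/
noncomputable def expSum (f : Polynomial ℤ) (h : ℤ) (n : ℕ) : ℂ :=
  ∑ μ ∈ (Finset.range n).filter (fun μ => (n : ℤ) ∣ f.eval (μ : ℤ)),
    e (h * μ / n)

lemma e_alt (y : ℝ) : e y = Complex.exp (((2*Real.pi*y : ℝ):ℂ) * Complex.I) := by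
  rw [e]; congr 1; push_cast; ring

lemma e_add (x y : ℝ) : e (x + y) = e x * e y := by
  simp [e, ← Complex.exp_add]; ring_nf

lemma e_int (k : ℤ) : e k = 1 := by
  rw [e, show 2*(Real.pi:ℂ)*Complex.I*((k:ℝ):ℂ) = (k:ℤ)*(2*Real.pi*Complex.I) by push_cast; ring]
  exact Complex.exp_int_mul_two_pi_mul_I k

lemma e_nat_mul (a : ℕ) (x : ℝ) : e (a * x) = e x ^ a := by
  rw [e, e, show 2*(Real.pi:ℂ)*Complex.I*(((a:ℝ)*x:ℝ):ℂ) = (a:ℕ)*(2*Real.pi*Complex.I*x) by push_cast; ring,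
    Complex.exp_nat_mul]

lemma conj_e (x : ℝ) : (starRingEnd ℂ) (e x) = e (-x) := by
  rw [e_alt x, e_alt (-x), ← Complex.exp_conj, map_mul, Complex.conj_ofReal, Complex.conj_I]
  congr 1
  push_cast
  ring

lemma e_eq_one_iff (n : ℕ) (hn : 0 < n) (m : ℤ) : e ((m:ℝ)/n) = 1 ↔ (n:ℤ) ∣ m := by
  rw [e, Complex.exp_eq_one_iff]
  have hn' : (n:ℂ) ≠ 0 := Nat.cast_ne_zero.mpr hn.ne'
  have h2 : (2*(Real.pi:ℂ)*Complex.I) ≠ 0 := by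
    simp [Real.pi_ne_zero, Complex.I_ne_zero]
  constructor
  · rintro ⟨k, hk⟩
    refine ⟨k, ?_⟩
    field_simp at hk
    have h3 : (m:ℂ) * (2*(Real.pi:ℂ)*Complex.I) = (k:ℂ)*(n:ℂ) * (2*(Real.pi:ℂ)*Complex.I) := by
      rw [← hk]; push_cast; rw [div_mul_cancel₀ _ hn']
    have h4 : (m:ℂ) = (n:ℂ) * k := by
      have := mul_right_cancel₀ h2 h3
      rw [this]; ring
    exact_mod_cast h4
  · rintro ⟨k, rfl⟩
    refine ⟨k, ?_⟩
    push_cast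
    field_simp

lemma sum_e (n : ℕ) (hn : 0 < n) (m : ℤ) :
    ∑ a ∈ Finset.Icc 1 n, e ((a:ℝ) * m / n) = if (n:ℤ) ∣ m then (n:ℂ) else 0 := by
  have hn' : (n:ℝ) ≠ 0 := Nat.cast_ne_zero.mpr hn.ne'
  set ζ := e ((m:ℝ)/n) with hζ
  have hterm : ∀ a : ℕ, e ((a:ℝ) * m / n) = ζ ^ a := by
    intro a
    rw [hζ, ← e_nat_mul]
    congr 1
    field_simp
  have hζn : ζ ^ n = 1 := by
    rw [hζ, ← e_nat_mul, show (n:ℝ) * ((m:ℝ)/n) = ((m:ℤ):ℝ) by field_simp, e_int]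
  simp only [hterm]
  by_cases hd : (n:ℤ) ∣ m
  · have h1 : ζ = 1 := (e_eq_one_iff n hn m).mpr hd
    simp [h1, hd]
  · have hζ1 : ζ ≠ 1 := fun hcon => hd ((e_eq_one_iff n hn m).mp hcon)
    rw [if_neg hd]
    have h2 : ∑ a ∈ Finset.Icc 1 n, ζ^a = ∑ i ∈ Finset.range n, ζ^(1+i) := by
      rw [show Finset.Icc 1 n = Finset.Ico 1 (n+1) from (Finset.Ico_add_one_right_eq_Icc 1 n).symm,
        Finset.sum_Ico_eq_sum_range]
      simp
    rw [h2]
    have h3 : ∑ i ∈ Finset.range n, ζ^(1+i) = ζ * ∑ i ∈ Finset.range n, ζ^i := by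
      rw [Finset.mul_sum]
      exact Finset.sum_congr rfl fun i _ => by rw [pow_add, pow_one]
    rw [h3, geom_sum_eq hζ1, hζn]
    simp

lemma count_boundZ (n : ℕ) (hn : 0 < n) (h : ℤ) (hh : h ≠ 0) (μ : ℤ) (R : Finset ℤ)
    (hR : ∀ ν ∈ R, 0 ≤ ν ∧ ν < n) :
    (R.filter (fun ν : ℤ => (n:ℤ) ∣ h * (μ - ν))).card ≤ Int.gcd h n := by
  set g := Int.gcd h n with hg
  have hg0 : 0 < g := Int.gcd_pos_of_ne_zero_left _ hh
  have hg0' : (0:ℤ) < g := by exact_mod_cast hg0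
  have hgn : (g:ℤ) ∣ (n:ℤ) := Int.gcd_dvd_right _ _
  set m : ℤ := (n:ℤ) / g with hm
  have hnm : (n:ℤ) = g * m := (Int.ediv_mul_cancel hgn).symm.trans (mul_comm _ _)
  have hm0 : (0:ℤ) < m := by
    rcases lt_or_ge 0 m with h'|h'
    · exact h'
    · exfalso
      have : (n:ℤ) ≤ 0 := by nlinarith
      have : (0:ℤ) < n := by exact_mod_cast hn
      omega
  set P := fun ν : ℤ => (n:ℤ) ∣ h * (μ - ν) with hP
  have key : ∀ ν ∈ R.filter P, m ∣ (μ - ν) := by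
    intro ν hν
    obtain ⟨-, hdvd⟩ := Finset.mem_filter.mp hν
    obtain ⟨h', hh'⟩ := (Int.gcd_dvd_left _ _ : (g:ℤ) ∣ h)
    have hcop : Int.gcd (h / g) ((n:ℤ) / g) = 1 := Int.gcd_div_gcd_div_gcd hg0
    have hhg : h / (g:ℤ) = h' := by rw [hh']; exact Int.mul_ediv_cancel_left _ hg0'.ne'
    rw [hhg, ← hm] at hcop
    have hmd : m ∣ h' * (μ - ν) := by
      have h5 : (g:ℤ) * m ∣ (g:ℤ) * (h' * (μ - ν)) := by
        rw [show (g:ℤ) * (h' * (μ - ν)) = h * (μ - ν) by rw [hh']; ring, ← hnm]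
        exact hdvd
      exact (mul_dvd_mul_iff_left hg0'.ne').mp h5
    exact Int.dvd_of_dvd_mul_right_of_gcd_one hmd (by rwa [Int.gcd_comm] at hcop)
  calc (R.filter P).card
      ≤ (Finset.Ico (0:ℤ) g).card := by
        apply Finset.card_le_card_of_injOn (fun ν => ν / m)
        · intro ν hν
          obtain ⟨hν0, hνn⟩ := hR ν (Finset.mem_filter.mp hν).1
          simp only [Finset.coe_Ico, Set.mem_Ico]
          constructor
          · exact Int.ediv_nonneg hν0 hm0.le
          · rw [Int.ediv_lt_iff_lt_mul hm0]
            calc ν < (n:ℤ) := hνn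
              _ = g * m := hnm
              _ = (g:ℤ) * m := rfl
        · intro ν₁ h₁ ν₂ h₂ heq
          simp only [Finset.mem_coe] at h₁ h₂
          have hd : m ∣ (ν₂ - ν₁) := by
            have d := dvd_sub (key ν₁ h₁) (key ν₂ h₂)
            have h6 : (μ - ν₁) - (μ - ν₂) = ν₂ - ν₁ := by ring
            rwa [h6] at d
          have hmod : ν₁ % m = ν₂ % m := Int.modEq_iff_dvd.mpr hd
          simp only at heq
          rw [← Int.mul_ediv_add_emod ν₁ m, ← Int.mul_ediv_add_emod ν₂ m, heq, hmod]
    _ = g := by simp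

theorem sum_sq_expSum_le
    (f : Polynomial ℤ) (hfprim : f.IsPrimitive) (hfirr : Irreducible f)
    (hfdeg : 1 < f.natDegree) :
    ∃ C : ℝ, ∀ n : ℕ, 0 < n → ∀ h : ℤ, h ≠ 0 →
      ∑ a ∈ Finset.Icc 1 n, ‖expSum f (a * h) n‖ ^ 2 ≤
        C * rootCount f n * n * Int.gcd h n := by
  refine ⟨1, ?_⟩
  intro n hn h hh
  classical
  set R : Finset ℤ :=
    Finset.filter (fun μ : ℤ => (n:ℤ) ∣ f.eval μ)
      (do let a ← Finset.range n; pure ((a : ℤ))) with hR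
  have hRmem : ∀ ν ∈ R, (0:ℤ) ≤ ν ∧ ν < n := by
    intro ν hν
    rw [hR, Finset.mem_filter] at hν
    obtain ⟨hν1, -⟩ := hν
    obtain ⟨a, ha, rfl⟩ : ∃ a < n, (a:ℤ) = ν := by simpa using hν1
    constructor
    · exact Int.natCast_nonneg a
    · exact_mod_cast ha
  have hexp : ∀ (w : ℤ), expSum f w n = ∑ μ ∈ R, e ((w:ℝ) * (μ:ℝ) / n) := fun w => rfl
  have hroot : rootCount f n = R.card := rfl
  set N : ℕ := ∑ μ ∈ R, (R.filter (fun ν : ℤ => (n:ℤ) ∣ h * (μ - ν))).card with hN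
  have expand : ∀ a : ℕ, expSum f (↑a * h) n * (starRingEnd ℂ) (expSum f (↑a * h) n)
      = ∑ μ ∈ R, ∑ ν ∈ R, e ((a:ℝ) * ((h * (μ - ν) : ℤ) : ℝ) / n) := by
    intro a
    rw [hexp, map_sum, Finset.sum_mul_sum]
    refine Finset.sum_congr rfl fun μ _ => Finset.sum_congr rfl fun ν _ => ?_
    rw [conj_e, ← e_add]
    congr 1
    have hn' : (n:ℝ) ≠ 0 := Nat.cast_ne_zero.mpr hn.ne'
    push_cast
    field_simp
    ring
  have hsum : ∑ a ∈ Finset.Icc 1 n, expSum f (↑a*h) n * (starRingEnd ℂ) (expSum f (↑a*h) n)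
      = (N:ℂ) * n := by
    simp only [expand]
    rw [Finset.sum_comm]
    have step : ∀ μ ∈ R, ∑ a ∈ Finset.Icc 1 n, ∑ ν ∈ R,
        e ((a:ℝ) * ((h * (μ - ν) : ℤ) : ℝ) / n)
        = ((R.filter (fun ν : ℤ => (n:ℤ) ∣ h * (μ - ν))).card : ℂ) * n := by
      intro μ _
      rw [Finset.sum_comm]
      have hstep : ∀ ν ∈ R, ∑ a ∈ Finset.Icc 1 n, e ((a:ℝ) * ((h * (μ - ν) : ℤ) : ℝ) / n)
          = if (n:ℤ) ∣ h * (μ - ν) then (n:ℂ) else 0 := fun ν _ => sum_e n hn _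
      rw [Finset.sum_congr rfl hstep, ← Finset.sum_filter, Finset.sum_const, nsmul_eq_mul]
    rw [Finset.sum_congr rfl step, ← Finset.sum_mul, hN, Nat.cast_sum]
  have habs : ∑ a ∈ Finset.Icc 1 n, ‖expSum f (↑a * h) n‖ ^ 2 = (N:ℝ) * n := by
    have hc : ((∑ a ∈ Finset.Icc 1 n, ‖expSum f (↑a * h) n‖ ^ 2 : ℝ) : ℂ)
        = (N:ℂ) * n := by
      rw [← hsum, Complex.ofReal_sum]
      refine Finset.sum_congr rfl fun a _ => ?_
      rw [← Complex.normSq_eq_norm_sq, Complex.mul_conj]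
    exact_mod_cast hc
  rw [habs]
  have hNle : (N:ℝ) ≤ (rootCount f n : ℝ) * (Int.gcd h n : ℝ) := by
    have hNle' : N ≤ rootCount f n * Int.gcd h n := by
      calc N ≤ ∑ _μ ∈ R, Int.gcd h n :=
            Finset.sum_le_sum fun μ _ => count_boundZ n hn h hh μ R hRmem
        _ = R.card * Int.gcd h n := by rw [Finset.sum_const, smul_eq_mul]
        _ = rootCount f n * Int.gcd h n := by rw [hroot]
    exact_mod_cast hNle'
  have hn0 : (0:ℝ) ≤ n := Nat.cast_nonneg n
  calc (N:ℝ) * n ≤ ((rootCount f n : ℝ) * (Int.gcd h n : ℝ)) * n :=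
        mul_le_mul_of_nonneg_right hNle hn0
    _ = 1 * (rootCount f n : ℝ) * n * (Int.gcd h n : ℝ) := by ring
end

section
/- Let f(x) ∈ ℤ[x] be a primitive irreducible polynomial of degree greater than one. Then there is a constant C (depending only on f) such that for all positive integers n, r(n) ≤ C · deg(f)^{ω(n)}, where ω(n) is the number of distinct prime factors of n. In particular, r(p^k) = O(1) uniformly over prime powers p^k. -/
set_option maxHeartbeats 1000000

open Polynomial Finset Filter
open scoped Classical

lemma rootCount_eq (f : Polynomial ℤ) (n : ℕ) :
    rootCount f n = ((Finset.range n).filter (fun μ : ℕ => (n : ℤ) ∣ f.eval (μ : ℤ))).card := by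
  unfold rootCount
  simp only [bind_pure_comp, Finset.fmap_def]
  symm
  apply Finset.card_bij (fun (μ : ℕ) _ => (μ : ℤ))
  · intro a ha
    simp only [Finset.mem_filter, Finset.mem_image, Finset.mem_range] at ha ⊢
    exact ⟨⟨a, ha.1, rfl⟩, ha.2⟩
  · intro a _ b _ h
    exact_mod_cast h
  · intro b hb
    simp only [Finset.mem_filter, Finset.mem_image, Finset.mem_range] at hb
    obtain ⟨⟨a, ha, rfl⟩, hdvd⟩ := hb
    exact ⟨a, by simp [Finset.mem_filter, Finset.mem_range, ha, hdvd], rfl⟩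

lemma bezout (f : Polynomial ℤ) (hfprim : f.IsPrimitive) (hfirr : Irreducible f)
    (hfdeg : 1 < f.natDegree) :
    ∃ (A B : Polynomial ℤ) (Δ : ℤ), Δ ≠ 0 ∧ A * f + B * derivative f = C Δ := by
  set φ := algebraMap ℤ ℚ with hφ
  have hinj : Function.Injective φ := Int.cast_injective
  set qf := f.map φ with hqf
  have hq_irr : Irreducible qf := (hfprim.irreducible_iff_irreducible_map_fraction_map).mp hfirr
  have hdeg : qf.natDegree = f.natDegree := natDegree_map_eq_of_injective hinj f
  have hd0 : f.natDegree ≠ 0 := by omega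
  have hder_ne : derivative qf ≠ 0 := by
    intro h
    have := natDegree_eq_zero_of_derivative_eq_zero h
    omega
  have hnotdvd : ¬ qf ∣ derivative qf := by
    intro h
    have h1 := natDegree_le_of_dvd h hder_ne
    have h2 : (derivative qf).natDegree < qf.natDegree :=
      natDegree_derivative_lt (by omega)
    omega
  have hcop : IsCoprime qf (derivative qf) := hq_irr.coprime_iff_not_dvd.mpr hnotdvd
  obtain ⟨a, b, hab⟩ := hcop
  obtain ⟨m₁, hA⟩ := IsLocalization.integerNormalization_map_to_map (nonZeroDivisors ℤ) a
  obtain ⟨m₂, hB⟩ := IsLocalization.integerNormalization_map_to_map (nonZeroDivisors ℤ) b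
  set A := IsLocalization.integerNormalization (nonZeroDivisors ℤ) a with hAdef
  set B := IsLocalization.integerNormalization (nonZeroDivisors ℤ) b with hBdef
  refine ⟨(m₂ : ℤ) • A, (m₁ : ℤ) • B, (m₁ : ℤ) * (m₂ : ℤ), ?_, ?_⟩
  · exact mul_ne_zero (nonZeroDivisors.ne_zero m₁.2) (nonZeroDivisors.ne_zero m₂.2)
  · apply Polynomial.map_injective φ hinj
    rw [Polynomial.map_add, Polynomial.map_mul, Polynomial.map_mul]
    rw [Polynomial.map_smul, Polynomial.map_smul, hA, hB, map_C]
    rw [← derivative_map]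
    simp only [← Int.cast_smul_eq_zsmul ℚ, hφ, algebraMap_int_eq, eq_intCast]
    rw [smul_smul, smul_smul, mul_comm ((m₂:ℤ):ℚ) ((m₁:ℤ):ℚ), smul_mul_assoc,
      smul_mul_assoc, ← smul_add]
    simp only [hqf, hφ, algebraMap_int_eq] at hab
    rw [hab, smul_eq_C_mul, mul_one, Int.cast_mul]

lemma deriv_val (f A B : Polynomial ℤ) (Δ : ℤ) (hΔ : Δ ≠ 0)
    (hbez : A * f + B * derivative f = C Δ) (p : ℕ) (hp : p.Prime)
    (k : ℕ) (v : ℕ) (hvv : v = Δ.natAbs.factorization p) (hk : v + 1 ≤ k) (μ : ℤ)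
    (hdvd : (p : ℤ) ^ k ∣ f.eval μ) :
    ¬ ((p : ℤ) ^ (v + 1) ∣ (derivative f).eval μ) := by
  subst hvv
  set v := Δ.natAbs.factorization p with hv
  intro hcon
  have heval : A.eval μ * f.eval μ + B.eval μ * (derivative f).eval μ = Δ := by
    have := congrArg (Polynomial.eval μ) hbez
    simpa using this
  have h1 : (p : ℤ) ^ (v + 1) ∣ A.eval μ * f.eval μ :=
    Dvd.dvd.mul_left (dvd_trans (pow_dvd_pow _ hk) hdvd) _
  have h2 : (p : ℤ) ^ (v + 1) ∣ Δ := by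
    rw [← heval]
    exact dvd_add h1 (Dvd.dvd.mul_left hcon _)
  have h3 : p ^ (v + 1) ∣ Δ.natAbs := by
    have h := Int.natAbs_dvd_natAbs.mpr h2
    simp only [Int.natAbs_pow, Int.natAbs_natCast] at h
    exact h
  have h4 := (Nat.Prime.pow_dvd_iff_le_factorization hp (Int.natAbs_ne_zero.mpr hΔ)).mp h3
  omega

lemma strong_dist {p : ℕ} [Fact p.Prime] (F : Polynomial ℤ_[p]) (a : ℤ_[p])
    (hnorm : ‖F.eval a‖ < ‖F.derivative.eval a‖ ^ 2) :
    ∃ z : ℤ_[p], F.eval z = 0 ∧ ‖a - z‖ * ‖F.derivative.eval a‖ ≤ ‖F.eval a‖ := by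
  obtain ⟨z, hz1, hz2, hz3, -⟩ := hensels_lemma hnorm
  simp only [Polynomial.coe_aeval_eq_eval] at hz1 hz2 hz3
  refine ⟨z, hz1, ?_⟩
  by_cases haz : a = z
  · simp [haz, hz1]
  have hpos : (0:ℝ) < ‖a - z‖ := by
    simp [norm_pos_iff, sub_ne_zero, haz]
  obtain ⟨kk, hkk⟩ := F.binomExpansion z (a - z)
  rw [add_sub_cancel] at hkk
  have hlt : ‖kk * (a - z) ^ 2‖ < ‖F.derivative.eval z * (a - z)‖ := by
    calc ‖kk * (a - z) ^ 2‖ ≤ ‖(a - z) ^ 2‖ := by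
          rw [norm_mul]
          exact mul_le_of_le_one_left (norm_nonneg _) kk.norm_le_one
      _ = ‖a - z‖ * ‖a - z‖ := by rw [sq, norm_mul]
      _ < ‖F.derivative.eval z‖ * ‖a - z‖ := by
          apply mul_lt_mul_of_pos_right _ hpos
          rw [hz3, ← norm_sub_rev]
          exact hz2
      _ = ‖F.derivative.eval z * (a - z)‖ := (norm_mul _ _).symm
  have heq : ‖F.eval a‖ = ‖F.derivative.eval z * (a - z)‖ := by
    rw [hkk, hz1, zero_add, add_comm]
    rw [PadicInt.norm_add_eq_max_of_ne (ne_of_lt hlt)]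
    exact max_eq_right (le_of_lt hlt)
  rw [heq, norm_mul, hz3, mul_comm]

lemma rootCount_prime_pow_le (f A B : Polynomial ℤ) (hf0 : f ≠ 0) (Δ : ℤ) (hΔ : Δ ≠ 0)
    (hbez : A * f + B * derivative f = C Δ) (hd : 1 ≤ f.natDegree)
    (p k : ℕ) (hp : p.Prime) (hk : 0 < k) :
    rootCount f (p ^ k) ≤ f.natDegree * p ^ (3 * Δ.natAbs.factorization p) := by
  rw [rootCount_eq]
  set v := Δ.natAbs.factorization p with hv
  clear_value v
  by_cases hcase : k ≤ 2 * v
  · calc ((Finset.range (p ^ k)).filter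
          (fun μ : ℕ => ((p ^ k : ℕ) : ℤ) ∣ f.eval (μ : ℤ))).card
        ≤ (range (p ^ k)).card := Finset.card_filter_le _ _
      _ = p ^ k := Finset.card_range _
      _ ≤ p ^ (3 * v) := Nat.pow_le_pow_right hp.pos (by omega)
      _ ≤ f.natDegree * p ^ (3 * v) := Nat.le_mul_of_pos_left _ hd
  · push_neg at hcase
    haveI : Fact p.Prime := ⟨hp⟩
    have hvk : v + 1 ≤ k := by omega
    obtain ⟨w, hwv⟩ : ∃ w : ℕ, w + v = k := ⟨k - v, by omega⟩
    set F : Polynomial ℤ_[p] := f.map (Int.castRingHom ℤ_[p]) with hF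
    have hFne : F ≠ 0 := by
      rw [hF, Ne, Polynomial.map_eq_zero_iff (Int.cast_injective)]
      exact hf0
    set S := (Finset.range (p ^ k)).filter
      (fun μ : ℕ => ((p ^ k : ℕ) : ℤ) ∣ f.eval (μ : ℤ)) with hS
    have hppos : (0:ℝ) < (p : ℝ) := by exact_mod_cast hp.pos
    have hpone : (1:ℝ) < (p : ℝ) := by exact_mod_cast hp.one_lt
    have key : ∀ μ : ℕ, ∃ z : ℤ_[p], μ ∈ S →
        F.eval z = 0 ∧ ‖((μ : ℤ) : ℤ_[p]) - z‖ ≤ (p : ℝ) ^ (-(w : ℤ)) := by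
      intro μ
      by_cases hμ : μ ∈ S
      swap
      · exact ⟨0, fun h => absurd h hμ⟩
      have hdvd : (p : ℤ) ^ k ∣ f.eval (μ : ℤ) := by
        have := (Finset.mem_filter.mp hμ).2
        exact_mod_cast this
      set a : ℤ_[p] := ((μ : ℤ) : ℤ_[p]) with ha
      have hevF : F.eval a = ((f.eval (μ : ℤ) : ℤ) : ℤ_[p]) := by
        simp [hF, ha, eval_intCast_map]
      have hevF' : F.derivative.eval a = (((derivative f).eval (μ : ℤ) : ℤ) : ℤ_[p]) := by
        rw [hF, derivative_map]
        simp [ha, eval_intCast_map]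
      have hek : ‖F.eval a‖ ≤ (p : ℝ) ^ (-(k : ℤ)) := by
        rw [hevF]
        exact PadicInt.norm_int_le_pow_iff_dvd.mpr hdvd
      have hder_ge : (p : ℝ) ^ (-(v : ℤ)) ≤ ‖F.derivative.eval a‖ := by
        by_contra hlt
        push_neg at hlt
        have h2 : ‖F.derivative.eval a‖ ≤ (p : ℝ) ^ (-(v : ℤ) - 1) := by
          rw [PadicInt.norm_le_pow_iff_norm_lt_pow_add_one, sub_add_cancel]
          exact hlt
        have h3 : (p : ℤ) ^ (v + 1) ∣ (derivative f).eval (μ : ℤ) := by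
          apply PadicInt.norm_int_le_pow_iff_dvd.mp
          rw [← hevF']
          convert h2 using 2
          push_cast
          ring
        exact deriv_val f A B Δ hΔ hbez p hp k v hv hvk (μ : ℤ) hdvd h3
      have hnorm : ‖F.eval a‖ < ‖F.derivative.eval a‖ ^ 2 := by
        calc ‖F.eval a‖ ≤ (p : ℝ) ^ (-(k : ℤ)) := hek
          _ < (p : ℝ) ^ (-(2 * v : ℤ)) := by
              apply zpow_lt_zpow_right₀ hpone
              omega
          _ = ((p : ℝ) ^ (-(v : ℤ))) ^ 2 := by
              rw [← zpow_natCast (((p:ℝ) ^ (-(v:ℤ)))), ← zpow_mul]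
              congr 1
              ring
          _ ≤ ‖F.derivative.eval a‖ ^ 2 := by
              apply pow_le_pow_left₀ (zpow_nonneg hppos.le _) hder_ge
      obtain ⟨z, hz1, hz2⟩ := strong_dist F a hnorm
      refine ⟨z, fun _ => ⟨hz1, ?_⟩⟩
      have hchain : ‖a - z‖ * (p : ℝ) ^ (-(v : ℤ)) ≤ (p : ℝ) ^ (-(k : ℤ)) :=
        le_trans (mul_le_mul_of_nonneg_left hder_ge (norm_nonneg _)) (le_trans hz2 hek)
      have hsplit : (p : ℝ) ^ (-(k : ℤ)) = (p : ℝ) ^ (-(w : ℤ)) * (p : ℝ) ^ (-(v : ℤ)) := by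
        rw [← zpow_add₀ (ne_of_gt hppos)]
        congr 1
        omega
      rw [hsplit] at hchain
      exact le_of_mul_le_mul_right hchain (zpow_pos hppos _)
    choose Z hZ using key
    have hcard : S.card ≤ (F.roots.toFinset ×ˢ Finset.range (p ^ v)).card := by
      apply Finset.card_le_card_of_injOn (fun μ => (Z μ, μ / p ^ w))
      · intro μ hμ
        obtain ⟨hz1, hz2⟩ := hZ μ hμ
        rw [Finset.mem_coe, Finset.mem_product]
        refine ⟨?_, ?_⟩
        · rw [Multiset.mem_toFinset, Polynomial.mem_roots hFne]
          exact hz1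
        · rw [Finset.mem_range]
          have hμlt : μ < p ^ k := Finset.mem_range.mp (Finset.mem_filter.mp hμ).1
          rw [Nat.div_lt_iff_lt_mul (Nat.pow_pos (n := w) hp.pos)]
          calc μ < p ^ k := hμlt
            _ = p ^ v * p ^ w := by rw [← pow_add]; congr 1; omega
      · intro μ hμ μ' hμ' heq
        simp only [Finset.mem_coe] at hμ hμ'
        simp only [Prod.mk.injEq] at heq
        obtain ⟨hzeq, hdiveq⟩ := heq
        obtain ⟨hz1, hz2⟩ := hZ μ hμ
        obtain ⟨hz1', hz2'⟩ := hZ μ' hμ'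
        rw [hzeq] at hz2
        have hdist : ‖((((μ' : ℤ) - (μ : ℤ)) : ℤ) : ℤ_[p])‖ ≤ (p : ℝ) ^ (-(w : ℤ)) := by
          have hsum : ((((μ' : ℤ) - (μ : ℤ)) : ℤ) : ℤ_[p]) =
              (((μ' : ℤ) : ℤ_[p]) - Z μ') + (Z μ' - ((μ : ℤ) : ℤ_[p])) := by push_cast; ring
          rw [hsum]
          apply le_trans (PadicInt.nonarchimedean _ _)
          apply max_le hz2'
          rw [norm_sub_rev]
          exact hz2
        have hdvd2' : (p : ℤ) ^ w ∣ (μ' : ℤ) - (μ : ℤ) :=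
          PadicInt.norm_int_le_pow_iff_dvd.mp hdist
        have hdvd2 : ((p ^ w : ℕ) : ℤ) ∣ (μ' : ℤ) - (μ : ℤ) := by
          push_cast
          exact hdvd2'
        have hmod0 : Nat.ModEq (p ^ w) μ μ' := Nat.modEq_iff_dvd.mpr hdvd2
        have hmod : μ % p ^ w = μ' % p ^ w := hmod0
        have e1 := Nat.div_add_mod μ (p ^ w)
        have e2 := Nat.div_add_mod μ' (p ^ w)
        calc μ = p ^ w * (μ / p ^ w) + μ % p ^ w := e1.symm
          _ = p ^ w * (μ' / p ^ w) + μ' % p ^ w := by rw [hdiveq, hmod]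
          _ = μ' := e2
    have hroots : F.roots.toFinset.card ≤ f.natDegree := by
      calc F.roots.toFinset.card ≤ Multiset.card F.roots := Multiset.toFinset_card_le _
        _ ≤ F.natDegree := Polynomial.card_roots' F
        _ = f.natDegree := natDegree_map_eq_of_injective Int.cast_injective f
    calc S.card ≤ (F.roots.toFinset ×ˢ Finset.range (p ^ v)).card := hcard
      _ = F.roots.toFinset.card * p ^ v := by rw [Finset.card_product, Finset.card_range]
      _ ≤ f.natDegree * p ^ v := Nat.mul_le_mul_right _ hroots
      _ ≤ f.natDegree * p ^ (3 * v) :=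
          Nat.mul_le_mul_left _ (Nat.pow_le_pow_right hp.pos (by omega))

lemma zc_eq (f : Polynomial ℤ) (n : ℕ) [NeZero n] :
    rootCount f n = (Finset.univ.filter
      (fun x : ZMod n => (f.map (Int.castRingHom (ZMod n))).eval x = 0)).card := by
  rw [rootCount_eq]
  have hcond : ∀ a : ℕ, ((f.map (Int.castRingHom (ZMod n))).eval (a : ZMod n) = 0 ↔
      (n : ℤ) ∣ f.eval (a : ℤ)) := by
    intro a
    rw [show ((a : ZMod n)) = (((a : ℤ) : ZMod n)) by push_cast; rfl]
    rw [eval_intCast_map]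
    exact_mod_cast ZMod.intCast_zmod_eq_zero_iff_dvd (f.eval (a : ℤ)) n
  apply Finset.card_bij (fun (μ : ℕ) _ => (μ : ZMod n))
  · intro a ha
    simp only [Finset.mem_filter, Finset.mem_range] at ha
    simp only [Finset.mem_filter, Finset.mem_univ, true_and]
    exact (hcond a).mpr ha.2
  · intro a ha b hb hab
    simp only [Finset.mem_filter, Finset.mem_range] at ha hb
    have := congrArg ZMod.val hab
    rwa [ZMod.val_cast_of_lt ha.1, ZMod.val_cast_of_lt hb.1] at this
  · intro x hx
    simp only [Finset.mem_filter, Finset.mem_univ, true_and] at hx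
    refine ⟨x.val, ?_, ?_⟩
    · simp only [Finset.mem_filter, Finset.mem_range]
      refine ⟨ZMod.val_lt x, ?_⟩
      apply (hcond x.val).mp
      rwa [ZMod.natCast_rightInverse x]
    · exact ZMod.natCast_rightInverse x

lemma zc_mul (f : Polynomial ℤ) {m n : ℕ} (hm : 0 < m) (hn : 0 < n) (h : m.Coprime n) :
    rootCount f (m * n) = rootCount f m * rootCount f n := by
  haveI : NeZero (m * n) := ⟨(Nat.mul_pos hm hn).ne'⟩
  haveI : NeZero m := ⟨hm.ne'⟩
  haveI : NeZero n := ⟨hn.ne'⟩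
  rw [zc_eq f m, zc_eq f n, zc_eq f (m * n)]
  set e := ZMod.chineseRemainder h with he
  have h1 : ∀ (R : Type) (_ : CommRing R) (χ : ZMod (m * n) →+* R) (x : ZMod (m * n)),
      χ ((f.map (Int.castRingHom (ZMod (m * n)))).eval x)
        = (f.map (Int.castRingHom R)).eval (χ x) := by
    intro R _ χ x
    have hsub : (χ.comp (Int.castRingHom (ZMod (m * n)))) = Int.castRingHom R :=
      Subsingleton.elim _ _
    rw [eval_map, Polynomial.hom_eval₂, hsub, ← eval_map]
  have hQ : ∀ x : ZMod (m * n),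
      ((f.map (Int.castRingHom (ZMod (m * n)))).eval x = 0) ↔
      ((f.map (Int.castRingHom (ZMod m))).eval (e x).1 = 0 ∧
       (f.map (Int.castRingHom (ZMod n))).eval (e x).2 = 0) := by
    intro x
    have hm1 := h1 (ZMod m) inferInstance ((RingHom.fst (ZMod m) (ZMod n)).comp
      (e : ZMod (m * n) →+* ZMod m × ZMod n)) x
    have hn1 := h1 (ZMod n) inferInstance ((RingHom.snd (ZMod m) (ZMod n)).comp
      (e : ZMod (m * n) →+* ZMod m × ZMod n)) x
    simp only [RingHom.coe_comp, Function.comp_apply, RingEquiv.coe_toRingHom,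
      RingHom.coe_fst, RingHom.coe_snd] at hm1 hn1
    constructor
    · intro hx
      rw [hx] at hm1 hn1
      simp only [map_zero] at hm1 hn1
      exact ⟨hm1.symm, hn1.symm⟩
    · intro ⟨h1x, h2x⟩
      have : e ((f.map (Int.castRingHom (ZMod (m * n)))).eval x) = 0 := by
        apply Prod.ext
        · simpa [hm1] using h1x
        · simpa [hn1] using h2x
      exact (EmbeddingLike.map_eq_zero_iff).mp this
  have hbij : (Finset.univ.filter
      (fun x : ZMod (m * n) => (f.map (Int.castRingHom (ZMod (m * n)))).eval x = 0)).card
      = (Finset.univ.filter (fun y : ZMod m × ZMod n =>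
          (f.map (Int.castRingHom (ZMod m))).eval y.1 = 0 ∧
          (f.map (Int.castRingHom (ZMod n))).eval y.2 = 0)).card := by
    apply Finset.card_bij (fun x _ => e x)
    · intro a ha
      simp only [Finset.mem_filter, Finset.mem_univ, true_and] at ha ⊢
      exact (hQ a).mp ha
    · intro a _ b _ hab
      exact e.injective hab
    · intro y hy
      simp only [Finset.mem_filter, Finset.mem_univ, true_and] at hy
      refine ⟨e.symm y, ?_, by simp⟩
      simp only [Finset.mem_filter, Finset.mem_univ, true_and]
      apply (hQ (e.symm y)).mpr
      simpa using hy
  refine hbij.trans ?_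
  rw [← Finset.univ_product_univ,
    Finset.filter_product (fun a : ZMod m => (f.map (Int.castRingHom (ZMod m))).eval a = 0)
      (fun b : ZMod n => (f.map (Int.castRingHom (ZMod n))).eval b = 0),
    Finset.card_product]

lemma rootCount_zero (f : Polynomial ℤ) : rootCount f 0 = 0 := by
  simp [rootCount_eq]

lemma rootCount_one (f : Polynomial ℤ) : rootCount f 1 = 1 := by
  rw [rootCount_eq]
  simp

lemma rootCount_mult (f : Polynomial ℤ) : ∀ x y : ℕ, x.Coprime y →
    rootCount f (x * y) = rootCount f x * rootCount f y := by
  intro x y hxy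
  rcases Nat.eq_zero_or_pos x with hx | hx
  · subst hx
    have : y = 1 := by simpa using hxy
    subst this
    simp [rootCount_zero, rootCount_one]
  rcases Nat.eq_zero_or_pos y with hy | hy
  · subst hy
    have : x = 1 := by simpa [Nat.coprime_zero_right] using hxy
    subst this
    simp [rootCount_zero, rootCount_one]
  exact zc_mul f hx hy hxy

lemma prod_pow_fact_dvd (D : ℕ) (hD : D ≠ 0) (s : Finset ℕ) :
    (∏ p ∈ s, p ^ D.factorization p) ∣ D := by
  classical
  set t := s ∩ D.primeFactors with ht
  have h1 : (∏ p ∈ s, p ^ D.factorization p) = ∏ p ∈ t, p ^ D.factorization p := by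
    symm
    apply Finset.prod_subset (Finset.inter_subset_left)
    intro x hx hxt
    have hxn : x ∉ D.primeFactors := fun hc => hxt (Finset.mem_inter.mpr ⟨hx, hc⟩)
    have : D.factorization x = 0 := by
      rw [← Nat.support_factorization] at hxn
      exact Finsupp.notMem_support_iff.mp hxn
    rw [this, pow_zero]
  rw [h1]
  have h2 : (∏ p ∈ t, p ^ D.factorization p) ∣ ∏ p ∈ D.primeFactors, p ^ D.factorization p :=
    Finset.prod_dvd_prod_of_subset _ _ _ (Finset.inter_subset_right)
  have h3 : (∏ p ∈ D.primeFactors, p ^ D.factorization p) = D := by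
    rw [← Nat.support_factorization]
    exact Nat.factorization_prod_pow_eq_self hD
  exact h2.trans (dvd_of_eq h3)

theorem rootCount_le_const_mul_deg_pow_omega
    (f : Polynomial ℤ) (hfprim : f.IsPrimitive) (hfirr : Irreducible f)
    (hfdeg : 1 < f.natDegree) :
    (∃ C : ℝ, ∀ n : ℕ, 0 < n →
        (rootCount f n : ℝ) ≤ C * (f.natDegree : ℝ) ^ n.primeFactors.card) ∧
      ∃ C' : ℝ, ∀ p k : ℕ, p.Prime → 0 < k → (rootCount f (p ^ k) : ℝ) ≤ C' := by
  obtain ⟨A, B, Δ, hΔ, hbez⟩ := bezout f hfprim hfirr hfdeg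
  have hf0 : f ≠ 0 := fun h => by simp [h] at hfdeg
  have hd1 : 1 ≤ f.natDegree := by omega
  set D := Δ.natAbs with hD
  have hD0 : D ≠ 0 := Int.natAbs_ne_zero.mpr hΔ
  have hDpos : 0 < D := Nat.pos_of_ne_zero hD0
  have hPP : ∀ p k : ℕ, p.Prime → 0 < k →
      rootCount f (p ^ k) ≤ f.natDegree * D ^ 3 := by
    intro p k hp hk
    refine (rootCount_prime_pow_le f A B hf0 Δ hΔ hbez hd1 p k hp hk).trans ?_
    apply Nat.mul_le_mul_left
    have hdvd : p ^ D.factorization p ∣ D := Nat.ordProj_dvd D p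
    have hle : p ^ D.factorization p ≤ D := Nat.le_of_dvd hDpos hdvd
    calc p ^ (3 * D.factorization p) = (p ^ D.factorization p) ^ 3 := by
          rw [← pow_mul, mul_comm]
      _ ≤ D ^ 3 := Nat.pow_le_pow_left hle 3
  constructor
  · refine ⟨(D ^ 3 : ℝ), ?_⟩
    intro n hn
    have hfact := Nat.multiplicative_factorization (rootCount f) (rootCount_mult f)
      (rootCount_one f) (Nat.pos_iff_ne_zero.mp hn)
    have hnat : rootCount f n ≤ D ^ 3 * f.natDegree ^ n.primeFactors.card := by
      rw [hfact, Finsupp.prod, Nat.support_factorization]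
      have hstep : ∏ p ∈ n.primeFactors, rootCount f (p ^ n.factorization p)
          ≤ ∏ p ∈ n.primeFactors, f.natDegree * p ^ (3 * D.factorization p) := by
        apply Finset.prod_le_prod'
        intro p hpmem
        obtain ⟨hp, hpdvd, hn0⟩ := Nat.mem_primeFactors.mp hpmem
        exact rootCount_prime_pow_le f A B hf0 Δ hΔ hbez hd1 p _ hp
          (Nat.Prime.factorization_pos_of_dvd hp hn0 hpdvd)
      apply hstep.trans
      rw [Finset.prod_mul_distrib, Finset.prod_const]
      have h2 : ∏ p ∈ n.primeFactors, p ^ (3 * D.factorization p)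
          = (∏ p ∈ n.primeFactors, p ^ D.factorization p) ^ 3 := by
        rw [← Finset.prod_pow]
        apply Finset.prod_congr rfl
        intro p _
        rw [← pow_mul, mul_comm]
      rw [h2, mul_comm (D ^ 3) (f.natDegree ^ n.primeFactors.card)]
      apply Nat.mul_le_mul_left
      exact Nat.pow_le_pow_left (Nat.le_of_dvd hDpos (prod_pow_fact_dvd D hD0 _)) 3
    calc (rootCount f n : ℝ) ≤ ((D ^ 3 * f.natDegree ^ n.primeFactors.card : ℕ) : ℝ) := by
          exact_mod_cast hnat
      _ = (D ^ 3 : ℝ) * (f.natDegree : ℝ) ^ n.primeFactors.card := by push_cast; ring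
  · refine ⟨((f.natDegree * D ^ 3 : ℕ) : ℝ), ?_⟩
    intro p k hp hk
    exact_mod_cast hPP p k hp hk
end

section
/- Let h be a multiplicative arithmetic function, nonnegative and supported on squarefree integers, and suppose there exist constants a ≥ 0 and b ≥ 1 such that Σ_{y < p ≤ x} h(p)·(log p)/p ≤ a·log(x/y) + b for all 2 ≤ y ≤ x, and suppose that Σ_{p ≤ y} h(p)·log p ≫ y for all sufficiently large y. Then for all x ≥ 2, Σ_{n ≤ x} h(n) ≫ (x / log x) · Π_{p ≤ x} (1 + h(p)/p), with implied constant depending only on h (through a, b and the implied constant in the hypothesis). -/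
open Finset Filter
open scoped Classical

lemma FI_Fpm (F : ℕ → ℝ)
    (hmult : ∀ m n : ℕ, Nat.Coprime m n → F (m * n) = F m * F n)
    (hsupp : ∀ n : ℕ, ¬ Squarefree n → F n = 0)
    {p m : ℕ} (hp : p.Prime) (hpm : ¬ p ∣ m) : F (p * m) = F p * F m := by
  by_cases hm : Squarefree m
  · exact hmult p m ((Nat.Prime.coprime_iff_not_dvd hp).2 hpm)
  · rw [hsupp m hm, hsupp (p * m) (fun h => hm h.of_mul_right), mul_zero]

lemma FI_F_prod (F : ℕ → ℝ)
    (hmult1 : F 1 = 1)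
    (hmult : ∀ m n : ℕ, Nat.Coprime m n → F (m * n) = F m * F n)
    (hsupp : ∀ n : ℕ, ¬ Squarefree n → F n = 0)
    {A : Finset ℕ} (hA : ∀ p ∈ A, p.Prime) :
    F (∏ p ∈ A, p) = ∏ p ∈ A, F p := by
  induction A using Finset.induction_on with
  | empty => simpa using hmult1
  | @insert q A hq ih =>
    rw [Finset.prod_insert hq, Finset.prod_insert hq]
    have hqp : q.Prime := hA q (mem_insert_self _ _)
    have hdvd : ¬ q ∣ ∏ p ∈ A, p := by
      rw [Nat.Prime.prime hqp |>.dvd_finset_prod_iff]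
      rintro ⟨i, hi, hqi⟩
      exact hq (((hA i (mem_insert_of_mem hi)).dvd_iff_eq hqp.ne_one).1 hqi ▸ hi)
    rw [FI_Fpm F hmult hsupp hqp hdvd, ih (fun p hp => hA p (mem_insert_of_mem hp))]

lemma FI_expand' (w : ℕ → ℝ) (Q : Finset ℕ) :
    ∏ p ∈ Q, (1 + w p) = ∑ A ∈ Q.powerset, ∏ p ∈ A, w p := by
  have : ∏ p ∈ Q, (w p + 1) = ∑ A ∈ Q.powerset, (∏ p ∈ A, w p) * ∏ p ∈ Q \ A, (1:ℝ) :=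
    Finset.prod_add w 1 Q
  simpa [add_comm] using this

lemma FI_Dbound (w l : ℕ → ℝ) (hw : ∀ p, 0 ≤ w p) (hl : ∀ p, 0 ≤ l p) (Q : Finset ℕ) :
    ∑ A ∈ Q.powerset, (∏ p ∈ A, w p) * (∑ q ∈ A, l q)
      ≤ (∑ q ∈ Q, w q * l q) * ∏ p ∈ Q, (1 + w p) := by
  induction Q using Finset.induction_on with
  | empty => simp
  | @insert a Q ha ih =>
    have hdisj : Disjoint Q.powerset (Q.powerset.image (insert a)) := by
      rw [Finset.disjoint_left]
      intro A hA hA'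
      rcases Finset.mem_image.1 hA' with ⟨t, _, rfl⟩
      exact ha (Finset.mem_powerset.1 hA (mem_insert_self a t))
    have hinj : ∀ t₁ ∈ Q.powerset, ∀ t₂ ∈ Q.powerset,
        insert a t₁ = insert a t₂ → t₁ = t₂ := by
      intro t₁ h₁ t₂ h₂ h
      have e₁ : (insert a t₁).erase a = t₁ :=
        Finset.erase_insert (fun h => ha (Finset.mem_powerset.1 h₁ h))
      have e₂ : (insert a t₂).erase a = t₂ :=
        Finset.erase_insert (fun h => ha (Finset.mem_powerset.1 h₂ h))
      rw [← e₁, ← e₂, h]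
    have hnot : ∀ t ∈ Q.powerset, a ∉ t := fun t ht h => ha (Finset.mem_powerset.1 ht h)
    have key : ∀ t ∈ Q.powerset,
        (∏ p ∈ insert a t, w p) * (∑ q ∈ insert a t, l q)
          = (w a * ∏ p ∈ t, w p) * (l a + ∑ q ∈ t, l q) := by
      intro t ht
      rw [Finset.prod_insert (hnot t ht), Finset.sum_insert (hnot t ht)]
    set D := ∑ A ∈ Q.powerset, (∏ p ∈ A, w p) * (∑ q ∈ A, l q) with hD
    set Pi := ∏ p ∈ Q, (1 + w p) with hPi
    set Sq := ∑ q ∈ Q, w q * l q with hSq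
    have hPinn : (0:ℝ) ≤ Pi := Finset.prod_nonneg (fun p _ => by linarith [hw p])
    have hDnn : (0:ℝ) ≤ D := Finset.sum_nonneg (fun A _ =>
      mul_nonneg (Finset.prod_nonneg (fun p _ => hw p)) (Finset.sum_nonneg (fun q _ => hl q)))
    have hSqnn : (0:ℝ) ≤ Sq := Finset.sum_nonneg (fun q _ => mul_nonneg (hw q) (hl q))
    have hP : ∑ A ∈ Q.powerset, ∏ p ∈ A, w p = Pi := (FI_expand' w Q).symm
    rw [Finset.powerset_insert, Finset.sum_union hdisj, Finset.sum_image hinj,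
      Finset.sum_congr rfl key, Finset.sum_insert ha, Finset.prod_insert ha]
    have expand2 : ∑ t ∈ Q.powerset, (w a * ∏ p ∈ t, w p) * (l a + ∑ q ∈ t, l q)
        = w a * l a * Pi + w a * D := by
      rw [← hP]
      rw [Finset.mul_sum, Finset.mul_sum, ← Finset.sum_add_distrib]
      refine Finset.sum_congr rfl (fun t _ => by ring)
    rw [expand2, ← hD, ← hSq, ← hPi]
    nlinarith [mul_le_mul_of_nonneg_left ih (hw a),
      mul_nonneg (mul_nonneg (hw a) (mul_nonneg (hw a) (hl a))) hPinn,
      ih, mul_nonneg (mul_nonneg (hw a) (hl a)) hPinn, mul_nonneg hSqnn hPinn,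
      mul_nonneg (hw a) (mul_nonneg hSqnn hPinn)]

lemma FI_prod_w (F : ℕ → ℝ)
    (hmult1 : F 1 = 1)
    (hmult : ∀ m n : ℕ, Nat.Coprime m n → F (m * n) = F m * F n)
    (hsupp : ∀ n : ℕ, ¬ Squarefree n → F n = 0)
    {A : Finset ℕ} (hA : ∀ p ∈ A, p.Prime) :
    ∏ p ∈ A, (F p / p) = F (∏ p ∈ A, p) / ((∏ p ∈ A, p : ℕ) : ℝ) := by
  rw [Finset.prod_div_distrib, FI_F_prod F hmult1 hmult hsupp hA, Nat.cast_prod]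

lemma FI_pi_pos {A : Finset ℕ} (hA : ∀ p ∈ A, p.Prime) : 1 ≤ ∏ p ∈ A, p :=
  Finset.one_le_prod' (fun p hp => (hA p hp).one_lt.le)

lemma FI_pi_inj {Q : Finset ℕ} (hQ : ∀ p ∈ Q, p.Prime) :
    ∀ A ∈ Q.powerset, ∀ B ∈ Q.powerset, (∏ p ∈ A, p) = (∏ p ∈ B, p) → A = B := by
  intro A hA B hB h
  have hA' : ∀ p ∈ A, p.Prime := fun p hp => hQ p (Finset.mem_powerset.1 hA hp)
  have hB' : ∀ p ∈ B, p.Prime := fun p hp => hQ p (Finset.mem_powerset.1 hB hp)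
  rw [← Nat.primeFactors_prod hA', ← Nat.primeFactors_prod hB', h]

lemma FI_sum_powerset_le (F : ℕ → ℝ)
    (hmult1 : F 1 = 1)
    (hmult : ∀ m n : ℕ, Nat.Coprime m n → F (m * n) = F m * F n)
    (hnonneg : ∀ n, 0 ≤ F n)
    (hsupp : ∀ n : ℕ, ¬ Squarefree n → F n = 0)
    {Q : Finset ℕ} (hQ : ∀ p ∈ Q, p.Prime) (t : ℝ) :
    ∑ A ∈ Q.powerset.filter (fun A => ((∏ p ∈ A, p : ℕ) : ℝ) ≤ t), ∏ p ∈ A, (F p / p)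
      ≤ ∑ n ∈ Icc 1 ⌊t⌋₊, F n / n := by
  set s := Q.powerset.filter (fun A => ((∏ p ∈ A, p : ℕ) : ℝ) ≤ t) with hs
  have step1 : ∑ A ∈ s, ∏ p ∈ A, (F p / p) = ∑ A ∈ s, F (∏ p ∈ A, p) / ((∏ p ∈ A, p : ℕ) : ℝ) := by
    refine Finset.sum_congr rfl (fun A hA => ?_)
    exact FI_prod_w F hmult1 hmult hsupp
      (fun p hp => hQ p (Finset.mem_powerset.1 (Finset.mem_filter.1 hA).1 hp))
  have inj : ∀ A ∈ s, ∀ B ∈ s, (∏ p ∈ A, p) = (∏ p ∈ B, p) → A = B := by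
    intro A hA B hB
    exact FI_pi_inj hQ A (Finset.mem_filter.1 hA).1 B (Finset.mem_filter.1 hB).1
  have step2 : ∑ A ∈ s, F (∏ p ∈ A, p) / ((∏ p ∈ A, p : ℕ) : ℝ)
      = ∑ n ∈ s.image (fun A => ∏ p ∈ A, p), F n / n :=
    (Finset.sum_image (f := fun n : ℕ => F n / n) inj).symm
  have hsub : s.image (fun A => ∏ p ∈ A, p) ⊆ Icc 1 ⌊t⌋₊ := by
    intro n hn
    rcases Finset.mem_image.1 hn with ⟨A, hA, rfl⟩
    have hA' := Finset.mem_filter.1 hA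
    rw [Finset.mem_Icc]
    exact ⟨FI_pi_pos (fun p hp => hQ p (Finset.mem_powerset.1 hA'.1 hp)), Nat.le_floor hA'.2⟩
  rw [step1, step2]
  refine Finset.sum_le_sum_of_subset_of_nonneg hsub (fun n _ _ => ?_)
  exact div_nonneg (hnonneg n) (Nat.cast_nonneg n)

lemma FI_T_le_P (F : ℕ → ℝ)
    (hmult1 : F 1 = 1)
    (hmult : ∀ m n : ℕ, Nat.Coprime m n → F (m * n) = F m * F n)
    (hnonneg : ∀ n, 0 ≤ F n)
    (hsupp : ∀ n : ℕ, ¬ Squarefree n → F n = 0)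
    {N : ℕ} {Q : Finset ℕ} (hQ : ∀ p ∈ Q, p.Prime)
    (hcover : ∀ n ∈ Icc 1 N, Squarefree n → n.primeFactors ⊆ Q) :
    ∑ n ∈ Icc 1 N, F n / n ≤ ∏ p ∈ Q, (1 + F p / p) := by
  have hfil : ∑ n ∈ (Icc 1 N).filter Squarefree, F n / n = ∑ n ∈ Icc 1 N, F n / n := by
    refine Finset.sum_subset (Finset.filter_subset _ _) (fun n hn hn' => ?_)
    rw [hsupp n (fun h => hn' (Finset.mem_filter.2 ⟨hn, h⟩)), zero_div]
  have step1 : ∑ n ∈ (Icc 1 N).filter Squarefree, F n / n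
      = ∑ n ∈ (Icc 1 N).filter Squarefree, ∏ p ∈ n.primeFactors, (F p / p) := by
    refine Finset.sum_congr rfl (fun n hn => ?_)
    have hsf : Squarefree n := (Finset.mem_filter.1 hn).2
    rw [FI_prod_w F hmult1 hmult hsupp (fun p hp => Nat.prime_of_mem_primeFactors hp),
      Nat.prod_primeFactors_of_squarefree hsf]
  have inj : ∀ m ∈ (Icc 1 N).filter Squarefree, ∀ n ∈ (Icc 1 N).filter Squarefree,
      m.primeFactors = n.primeFactors → m = n := by
    intro m hm n hn h
    have hm' : Squarefree m := (Finset.mem_filter.1 hm).2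
    have hn' : Squarefree n := (Finset.mem_filter.1 hn).2
    rw [← Nat.prod_primeFactors_of_squarefree hm', ← Nat.prod_primeFactors_of_squarefree hn', h]
  have step2 : ∑ n ∈ (Icc 1 N).filter Squarefree, ∏ p ∈ n.primeFactors, (F p / p)
      = ∑ A ∈ ((Icc 1 N).filter Squarefree).image Nat.primeFactors, ∏ p ∈ A, (F p / p) :=
    (Finset.sum_image (f := fun A : Finset ℕ => ∏ p ∈ A, (F p / p)) inj).symm
  have hsub : ((Icc 1 N).filter Squarefree).image Nat.primeFactors ⊆ Q.powerset := by
    intro A hA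
    rcases Finset.mem_image.1 hA with ⟨n, hn, rfl⟩
    have hn' := Finset.mem_filter.1 hn
    exact Finset.mem_powerset.2 (hcover n hn'.1 hn'.2)
  rw [← hfil, step1, step2, FI_expand']
  refine Finset.sum_le_sum_of_subset_of_nonneg hsub (fun A _ _ => ?_)
  exact Finset.prod_nonneg (fun p _ => div_nonneg (hnonneg p) (Nat.cast_nonneg p))

lemma FI_pair (F : ℕ → ℝ)
    (hmult : ∀ m n : ℕ, Nat.Coprime m n → F (m * n) = F m * F n)
    (hnonneg : ∀ n, 0 ≤ F n)
    (hsupp : ∀ n : ℕ, ¬ Squarefree n → F n = 0)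
    {N M : ℕ} :
    ∑ m ∈ Icc 1 M, F m *
        (∑ p ∈ (Icc 1 N).filter (fun p => p.Prime ∧ p * m ≤ N ∧ ¬ p ∣ m), F p * Real.log p)
      ≤ ∑ n ∈ Icc 1 N, F n * Real.log n := by
  have lhs_eq : ∑ m ∈ Icc 1 M, F m *
        (∑ p ∈ (Icc 1 N).filter (fun p => p.Prime ∧ p * m ≤ N ∧ ¬ p ∣ m), F p * Real.log p)
      = ∑ x ∈ (Icc 1 M).sigma
          (fun m => (Icc 1 N).filter (fun p => p.Prime ∧ p * m ≤ N ∧ ¬ p ∣ m)),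
          F x.1 * (F x.2 * Real.log x.2) := by
    rw [Finset.sum_sigma]
    exact Finset.sum_congr rfl (fun m _ => by rw [Finset.mul_sum])
  set T := (Icc 1 N).sigma
      (fun n => n.primeFactors.filter (fun p => n / p ≤ M ∧ ¬ p ∣ n / p)) with hT
  have mid_eq : ∑ x ∈ (Icc 1 M).sigma
          (fun m => (Icc 1 N).filter (fun p => p.Prime ∧ p * m ≤ N ∧ ¬ p ∣ m)),
          F x.1 * (F x.2 * Real.log x.2)
      = ∑ y ∈ T, F y.1 * Real.log y.2 := by
    refine Finset.sum_nbij' (fun x => ⟨x.2 * x.1, x.2⟩) (fun y => ⟨y.1 / y.2, y.2⟩) ?_ ?_ ?_ ?_ ?_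
    · rintro ⟨m, p⟩ hx
      rw [Finset.mem_sigma] at hx
      obtain ⟨hm, hp⟩ := hx
      rw [Finset.mem_filter, Finset.mem_Icc] at hp
      obtain ⟨⟨hp1, hpN⟩, hpp, hpmN, hpm⟩ := hp
      rw [Finset.mem_Icc] at hm
      rw [hT, Finset.mem_sigma, Finset.mem_Icc, Finset.mem_filter]
      have hm0 : 0 < m := hm.1
      have hn0 : 0 < p * m := Nat.mul_pos hpp.pos hm0
      have hdiv : p * m / p = m := Nat.mul_div_cancel_left m hpp.pos
      refine ⟨⟨hn0, hpmN⟩, Nat.mem_primeFactors.2 ⟨hpp, dvd_mul_right p m, hn0.ne'⟩, ?_, ?_⟩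
      · rw [hdiv]; exact hm.2
      · rw [hdiv]; exact hpm
    · rintro ⟨n, p⟩ hy
      rw [hT, Finset.mem_sigma, Finset.mem_Icc, Finset.mem_filter] at hy
      obtain ⟨⟨hn1, hnN⟩, hpf, hnpM, hpnp⟩ := hy
      obtain ⟨hpp, hpdvd, hne⟩ := Nat.mem_primeFactors.1 hpf
      rw [Finset.mem_sigma, Finset.mem_Icc, Finset.mem_filter, Finset.mem_Icc]
      have hpn : p ≤ n := Nat.le_of_dvd hn1 hpdvd
      have h1np : 1 ≤ n / p := (Nat.one_le_div_iff hpp.pos).2 hpn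
      refine ⟨⟨h1np, hnpM⟩, ⟨hpp.one_lt.le, hpn.trans hnN⟩, hpp, ?_, hpnp⟩
      rw [Nat.mul_div_cancel' hpdvd]; exact hnN
    · rintro ⟨m, p⟩ hx
      rw [Finset.mem_sigma, Finset.mem_filter] at hx
      have hpp : p.Prime := hx.2.2.1
      have : p * m / p = m := Nat.mul_div_cancel_left m hpp.pos
      simp only [this]
    · rintro ⟨n, p⟩ hy
      rw [hT, Finset.mem_sigma, Finset.mem_filter] at hy
      have hpdvd : p ∣ n := (Nat.mem_primeFactors.1 hy.2.1).2.1
      have : p * (n / p) = n := Nat.mul_div_cancel' hpdvd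
      simp only [this]
    · rintro ⟨m, p⟩ hx
      rw [Finset.mem_sigma, Finset.mem_filter] at hx
      have hpp : p.Prime := hx.2.2.1
      have hpm : ¬ p ∣ m := hx.2.2.2.2
      show F m * (F p * Real.log p) = F (p * m) * Real.log p
      rw [FI_Fpm F hmult hsupp hpp hpm]; ring
  have final : ∑ y ∈ T, F y.1 * Real.log y.2 ≤ ∑ n ∈ Icc 1 N, F n * Real.log n := by
    rw [hT, Finset.sum_sigma]
    refine Finset.sum_le_sum (fun n hn => ?_)
    rw [Finset.mem_Icc] at hn
    have hn0 : 0 < n := hn.1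
    have hlog : ∑ p ∈ n.primeFactors.filter (fun p => n / p ≤ M ∧ ¬ p ∣ n / p),
        Real.log p ≤ Real.log n := by
      have h1 : ∑ p ∈ n.primeFactors.filter (fun p => n / p ≤ M ∧ ¬ p ∣ n / p), Real.log p
          ≤ ∑ p ∈ n.primeFactors, Real.log p := by
        refine Finset.sum_le_sum_of_subset_of_nonneg (Finset.filter_subset _ _)
          (fun p hp _ => Real.log_nonneg ?_)
        exact_mod_cast (Nat.prime_of_mem_primeFactors hp).one_lt.le
      have h2 : ∑ p ∈ n.primeFactors, Real.log p
          = Real.log ((∏ p ∈ n.primeFactors, p : ℕ) : ℝ) := by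
        rw [Nat.cast_prod, Real.log_prod]
        intro p hp
        exact_mod_cast (Nat.prime_of_mem_primeFactors hp).pos.ne'
      have h3 : ((∏ p ∈ n.primeFactors, p : ℕ) : ℝ) ≤ (n : ℝ) := by
        exact_mod_cast Nat.le_of_dvd hn0 (Nat.prod_primeFactors_dvd n)
      calc ∑ p ∈ n.primeFactors.filter (fun p => n / p ≤ M ∧ ¬ p ∣ n / p), Real.log p
          ≤ ∑ p ∈ n.primeFactors, Real.log p := h1
        _ = Real.log ((∏ p ∈ n.primeFactors, p : ℕ) : ℝ) := h2
        _ ≤ Real.log n := Real.log_le_log (by exact_mod_cast Finset.prod_pos (fun p hp => (Nat.prime_of_mem_primeFactors hp).pos)) h3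
    calc ∑ p ∈ n.primeFactors.filter (fun p => n / p ≤ M ∧ ¬ p ∣ n / p), F n * Real.log p
        = F n * ∑ p ∈ n.primeFactors.filter (fun p => n / p ≤ M ∧ ¬ p ∣ n / p), Real.log p := by
          rw [Finset.mul_sum]
      _ ≤ F n * Real.log n := mul_le_mul_of_nonneg_left hlog (hnonneg n)
  rw [lhs_eq, mid_eq]; exact final

lemma FI_M1 (F : ℕ → ℝ) (hnonneg : ∀ n, 0 ≤ F n) (a b : ℝ) (ha : 0 ≤ a)
    (hmertens : ∀ x y : ℝ, 2 ≤ y → y ≤ x →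
      ∑ p ∈ (Finset.Icc 1 ⌊x⌋₊).filter (fun p : ℕ => p.Prime ∧ y < (p : ℝ)),
        F p * Real.log p / p ≤ a * Real.log (x / y) + b)
    (x : ℝ) (hx : 2 ≤ x) :
    ∑ p ∈ (Finset.Icc 1 ⌊x⌋₊).filter Nat.Prime, F p * Real.log p / p
      ≤ a * Real.log x + (b + F 2 * Real.log 2 / 2) := by
  have hsplit := Finset.sum_filter_add_sum_filter_not
    ((Finset.Icc 1 ⌊x⌋₊).filter Nat.Prime) (fun p : ℕ => (2:ℝ) < (p:ℝ))
    (fun p : ℕ => F p * Real.log p / p)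
  have heq : ((Finset.Icc 1 ⌊x⌋₊).filter Nat.Prime).filter (fun p : ℕ => (2:ℝ) < (p:ℝ))
      = (Finset.Icc 1 ⌊x⌋₊).filter (fun p : ℕ => p.Prime ∧ (2:ℝ) < (p : ℝ)) := by
    rw [Finset.filter_filter]
  have h1 : ∑ p ∈ ((Finset.Icc 1 ⌊x⌋₊).filter Nat.Prime).filter
        (fun p : ℕ => (2:ℝ) < (p:ℝ)), F p * Real.log p / p ≤ a * Real.log x + b := by
    rw [heq]
    refine (hmertens x 2 le_rfl hx).trans ?_
    have : Real.log (x / 2) ≤ Real.log x :=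
      Real.log_le_log (by linarith) (by linarith)
    nlinarith
  have h2 : ∑ p ∈ ((Finset.Icc 1 ⌊x⌋₊).filter Nat.Prime).filter
        (fun p : ℕ => ¬ (2:ℝ) < (p:ℝ)), F p * Real.log p / p ≤ F 2 * Real.log 2 / 2 := by
    have hsub : ((Finset.Icc 1 ⌊x⌋₊).filter Nat.Prime).filter
        (fun p : ℕ => ¬ (2:ℝ) < (p:ℝ)) ⊆ {2} := by
      intro p hp
      rw [Finset.mem_filter, Finset.mem_filter] at hp
      have hp2 : 2 ≤ p := hp.1.2.two_le
      have : (p:ℝ) ≤ 2 := le_of_not_gt hp.2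
      have : p ≤ 2 := by exact_mod_cast this
      simp [le_antisymm this hp2]
    refine (Finset.sum_le_sum_of_subset_of_nonneg hsub (fun p _ _ => ?_)).trans ?_
    · exact div_nonneg (mul_nonneg (hnonneg p) (Real.log_natCast_nonneg p)) (Nat.cast_nonneg p)
    · rw [Finset.sum_singleton]
      push_cast
      exact le_refl _
  linarith [hsplit.symm ▸ (add_le_add h1 h2)]

lemma FI_Psplit (F : ℕ → ℝ) (hnonneg : ∀ n, 0 ≤ F n) (a b : ℝ)
    (hmertens : ∀ x y : ℝ, 2 ≤ y → y ≤ x →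
      ∑ p ∈ (Finset.Icc 1 ⌊x⌋₊).filter (fun p : ℕ => p.Prime ∧ y < (p : ℝ)),
        F p * Real.log p / p ≤ a * Real.log (x / y) + b)
    (x y : ℝ) (hy : 2 ≤ y) (hyx : y ≤ x) :
    ∏ p ∈ (Finset.Icc 1 ⌊x⌋₊).filter Nat.Prime, (1 + F p / p)
      ≤ (∏ p ∈ (Finset.Icc 1 ⌊y⌋₊).filter Nat.Prime, (1 + F p / p)) *
        Real.exp ((a * Real.log (x / y) + b) / Real.log y) := by
  set Qx := (Finset.Icc 1 ⌊x⌋₊).filter Nat.Prime with hQx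
  set Qy := (Finset.Icc 1 ⌊y⌋₊).filter Nat.Prime with hQy
  have hsub : Qy ⊆ Qx :=
    Finset.filter_subset_filter _ (Finset.Icc_subset_Icc_right (Nat.floor_le_floor hyx))
  have hlogy : 0 < Real.log y := Real.log_pos (by linarith)
  have hdiffmem : ∀ p ∈ Qx \ Qy, p.Prime ∧ y < (p:ℝ) := by
    intro p hp
    rw [Finset.mem_sdiff, hQx, hQy, Finset.mem_filter, Finset.mem_filter, Finset.mem_Icc,
      Finset.mem_Icc] at hp
    obtain ⟨⟨⟨hp1, hpx⟩, hpp⟩, hnot⟩ := hp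
    refine ⟨hpp, ?_⟩
    have : ¬ p ≤ ⌊y⌋₊ := fun h => hnot ⟨⟨hp1, h⟩, hpp⟩
    exact (Nat.floor_lt (by linarith)).1 (lt_of_not_ge this)
  have hkey : Real.log y * ∑ p ∈ Qx \ Qy, F p / p ≤ a * Real.log (x / y) + b := by
    have step1 : Real.log y * ∑ p ∈ Qx \ Qy, F p / p
        ≤ ∑ p ∈ Qx \ Qy, F p * Real.log p / p := by
      rw [Finset.mul_sum]
      refine Finset.sum_le_sum (fun p hp => ?_)
      obtain ⟨hpp, hyp⟩ := hdiffmem p hp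
      have h1 : Real.log y ≤ Real.log p := Real.log_le_log (by linarith) hyp.le
      have h2 : (0:ℝ) ≤ F p / p := div_nonneg (hnonneg p) (Nat.cast_nonneg p)
      calc Real.log y * (F p / p) ≤ Real.log p * (F p / p) :=
            mul_le_mul_of_nonneg_right h1 h2
        _ = F p * Real.log p / p := by ring
    have step2 : ∑ p ∈ Qx \ Qy, F p * Real.log p / p
        ≤ ∑ p ∈ (Finset.Icc 1 ⌊x⌋₊).filter (fun p : ℕ => p.Prime ∧ y < (p : ℝ)),
            F p * Real.log p / p := by
      refine Finset.sum_le_sum_of_subset_of_nonneg ?_ (fun p _ _ =>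
        div_nonneg (mul_nonneg (hnonneg p) (Real.log_natCast_nonneg p)) (Nat.cast_nonneg p))
      intro p hp
      have h := hdiffmem p hp
      have hpx : p ∈ Qx := (Finset.mem_sdiff.1 hp).1
      rw [hQx, Finset.mem_filter] at hpx
      exact Finset.mem_filter.2 ⟨hpx.1, h⟩
    exact (step1.trans step2).trans (hmertens x y hy hyx)
  have hprodle : ∏ p ∈ Qx \ Qy, (1 + F p / p)
      ≤ Real.exp ((a * Real.log (x / y) + b) / Real.log y) := by
    have h1 : ∏ p ∈ Qx \ Qy, (1 + F p / p) ≤ ∏ p ∈ Qx \ Qy, Real.exp (F p / p) := by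
      refine Finset.prod_le_prod (fun p _ => ?_) (fun p _ => ?_)
      · have := div_nonneg (hnonneg p) (Nat.cast_nonneg p); linarith
      · have := Real.add_one_le_exp (F p / p)
        linarith
    have h2 : ∏ p ∈ Qx \ Qy, Real.exp (F p / p) = Real.exp (∑ p ∈ Qx \ Qy, F p / p) :=
      (Real.exp_sum _ _).symm
    have h3 : ∑ p ∈ Qx \ Qy, F p / p ≤ (a * Real.log (x / y) + b) / Real.log y := by
      rw [le_div_iff₀ hlogy]
      linarith [hkey]
    calc ∏ p ∈ Qx \ Qy, (1 + F p / p) ≤ Real.exp (∑ p ∈ Qx \ Qy, F p / p) := h2 ▸ h1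
      _ ≤ Real.exp ((a * Real.log (x / y) + b) / Real.log y) := Real.exp_le_exp.2 h3
  have hPy : (0:ℝ) ≤ ∏ p ∈ Qy, (1 + F p / p) :=
    Finset.prod_nonneg (fun p _ => by
      have := div_nonneg (hnonneg p) (Nat.cast_nonneg p); linarith)
  calc ∏ p ∈ Qx, (1 + F p / p) = (∏ p ∈ Qx \ Qy, (1 + F p / p)) * ∏ p ∈ Qy, (1 + F p / p) :=
        (Finset.prod_sdiff hsub).symm
    _ ≤ Real.exp ((a * Real.log (x / y) + b) / Real.log y) * ∏ p ∈ Qy, (1 + F p / p) :=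
        mul_le_mul_of_nonneg_right hprodle hPy
    _ = (∏ p ∈ Qy, (1 + F p / p)) * Real.exp ((a * Real.log (x / y) + b) / Real.log y) := by
        ring

set_option maxHeartbeats 2000000 in
lemma FI_FL (F : ℕ → ℝ)
    (hmult1 : F 1 = 1)
    (hmult : ∀ m n : ℕ, Nat.Coprime m n → F (m * n) = F m * F n)
    (hnonneg : ∀ n, 0 ≤ F n)
    (hsupp : ∀ n : ℕ, ¬ Squarefree n → F n = 0)
    (a b : ℝ) (ha : 0 ≤ a) (hb : 1 ≤ b)
    (hmertens : ∀ x y : ℝ, 2 ≤ y → y ≤ x →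
      ∑ p ∈ (Finset.Icc 1 ⌊x⌋₊).filter (fun p : ℕ => p.Prime ∧ y < (p : ℝ)),
        F p * Real.log p / p ≤ a * Real.log (x / y) + b) :
    ∃ δ t₀ : ℝ, 0 < δ ∧ 2 ≤ t₀ ∧ ∀ t : ℝ, t₀ ≤ t →
      δ * ∏ p ∈ (Finset.Icc 1 ⌊t⌋₊).filter Nat.Prime, (1 + F p / p)
        ≤ ∑ n ∈ Finset.Icc 1 ⌊t⌋₊, F n / n := by
  obtain ⟨B, hBdef⟩ : ∃ B : ℝ, B = b + F 2 * Real.log 2 / 2 := ⟨_, rfl⟩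
  have hlog2 : 0 < Real.log 2 := Real.log_pos (by norm_num)
  have hF2 : 0 ≤ F 2 * Real.log 2 / 2 :=
    div_nonneg (mul_nonneg (hnonneg 2) hlog2.le) (by norm_num)
  have hB : 1 ≤ B := by rw [hBdef]; linarith
  have hbB : b ≤ B := by rw [hBdef]; linarith
  obtain ⟨v, hvdef⟩ : ∃ v : ℝ, v = 4 * (a + 1) := ⟨_, rfl⟩
  have hv4 : 4 ≤ v := by linarith
  have hv0 : 0 < v := by linarith
  refine ⟨(1/2) * Real.exp (-(v * (a + 1))), Real.exp (4 * B + v), by positivity, ?_, ?_⟩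
  · have h8 : (8:ℝ) ≤ 4 * B + v := by nlinarith
    have := Real.add_one_le_exp (4 * B + v)
    linarith
  intro t ht
  have ht0 : (0:ℝ) < t := lt_of_lt_of_le (Real.exp_pos _) ht
  have hlogt : 4 * B + v ≤ Real.log t := by
    have := Real.log_le_log (Real.exp_pos _) ht
    rwa [Real.log_exp] at this
  have hlogt0 : 0 < Real.log t := by linarith
  have ht2 : (2:ℝ) ≤ t := by
    have h8 : (8:ℝ) ≤ 4 * B + v := by linarith
    have := Real.add_one_le_exp (4 * B + v)
    linarith
  set z := t ^ ((1:ℝ)/v) with hzdef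
  have hz0 : 0 < z := Real.rpow_pos_of_pos ht0 _
  have hlogz : Real.log z = Real.log t / v := by
    rw [hzdef, Real.log_rpow ht0]; ring
  have hlogzv : v * Real.log z = Real.log t := by
    rw [hlogz]; field_simp
  have hlogz1 : 1 ≤ Real.log z := by
    rw [hlogz, le_div_iff₀ hv0]
    nlinarith
  have hz2 : (2:ℝ) ≤ z := by
    have hlog2le : Real.log 2 ≤ Real.log z := by
      have : Real.log 2 ≤ 1 := by
        have := Real.log_two_lt_d9
        linarith
      linarith
    exact (Real.log_le_log_iff (by norm_num) hz0).1 hlog2le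
  have hzt : z ≤ t := by
    have h1 : (1:ℝ)/v ≤ 1 := by
      rw [div_le_one hv0]; linarith
    have := Real.rpow_le_rpow_of_exponent_le (by linarith : (1:ℝ) ≤ t) h1
    rwa [Real.rpow_one] at this
  set Q := (Finset.Icc 1 ⌊z⌋₊).filter Nat.Prime with hQdef
  have hQ : ∀ p ∈ Q, p.Prime := fun p hp => (Finset.mem_filter.1 hp).2
  set w : ℕ → ℝ := fun p => F p / p with hwdef
  have hw : ∀ p, 0 ≤ w p := fun p => div_nonneg (hnonneg p) (Nat.cast_nonneg p)
  set Pz := ∏ p ∈ Q, (1 + w p) with hPzdef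
  have hPz0 : 0 ≤ Pz := Finset.prod_nonneg (fun p _ => by have := hw p; linarith)
  have hexpand : Pz = ∑ A ∈ Q.powerset, ∏ p ∈ A, w p := FI_expand' w Q
  set Sin := ∑ A ∈ Q.powerset.filter (fun A => ((∏ p ∈ A, p : ℕ) : ℝ) ≤ t),
      ∏ p ∈ A, w p with hSindef
  set Sout := ∑ A ∈ Q.powerset.filter (fun A => ¬ ((∏ p ∈ A, p : ℕ) : ℝ) ≤ t),
      ∏ p ∈ A, w p with hSoutdef
  have hsplit : Sin + Sout = Pz := by
    rw [hSindef, hSoutdef, hexpand]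
    exact Finset.sum_filter_add_sum_filter_not _ _ _
  have hSin_le : Sin ≤ ∑ n ∈ Finset.Icc 1 ⌊t⌋₊, F n / n :=
    FI_sum_powerset_le F hmult1 hmult hnonneg hsupp hQ t
  -- bound Sout
  have hSout : Real.log t * Sout ≤ (a * Real.log z + B) * Pz := by
    have step1 : Real.log t * Sout
        ≤ ∑ A ∈ Q.powerset.filter (fun A => ¬ ((∏ p ∈ A, p : ℕ) : ℝ) ≤ t),
            (∏ p ∈ A, w p) * (∑ q ∈ A, Real.log q) := by
      rw [hSoutdef, Finset.mul_sum]
      refine Finset.sum_le_sum (fun A hA => ?_)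
      obtain ⟨hApw, hAt⟩ := Finset.mem_filter.1 hA
      have hAprime : ∀ p ∈ A, p.Prime := fun p hp => hQ p (Finset.mem_powerset.1 hApw hp)
      have hlogA : Real.log t ≤ ∑ q ∈ A, Real.log q := by
        have h1 : Real.log t ≤ Real.log ((∏ p ∈ A, p : ℕ) : ℝ) :=
          Real.log_le_log ht0 (le_of_not_ge hAt)
        have h2 : Real.log ((∏ p ∈ A, p : ℕ) : ℝ) = ∑ q ∈ A, Real.log q := by
          rw [Nat.cast_prod, Real.log_prod]
          intro p hp
          exact_mod_cast (hAprime p hp).pos.ne'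
        linarith
      have hwA : 0 ≤ ∏ p ∈ A, w p := Finset.prod_nonneg (fun p _ => hw p)
      calc Real.log t * ∏ p ∈ A, w p ≤ (∑ q ∈ A, Real.log q) * ∏ p ∈ A, w p :=
            mul_le_mul_of_nonneg_right hlogA hwA
        _ = (∏ p ∈ A, w p) * (∑ q ∈ A, Real.log q) := by ring
    have step2 : ∑ A ∈ Q.powerset.filter (fun A => ¬ ((∏ p ∈ A, p : ℕ) : ℝ) ≤ t),
            (∏ p ∈ A, w p) * (∑ q ∈ A, Real.log q)
        ≤ ∑ A ∈ Q.powerset, (∏ p ∈ A, w p) * (∑ q ∈ A, Real.log q) := by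
      refine Finset.sum_le_sum_of_subset_of_nonneg (Finset.filter_subset _ _)
        (fun A hA _ => ?_)
      exact mul_nonneg (Finset.prod_nonneg (fun p _ => hw p))
        (Finset.sum_nonneg (fun q _ => Real.log_natCast_nonneg q))
    have step3 : ∑ A ∈ Q.powerset, (∏ p ∈ A, w p) * (∑ q ∈ A, Real.log q)
        ≤ (∑ q ∈ Q, w q * Real.log q) * Pz :=
      FI_Dbound w (fun q => Real.log q) hw (fun q => Real.log_natCast_nonneg q) Q
    have step4 : ∑ q ∈ Q, w q * Real.log q ≤ a * Real.log z + B := by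
      have := FI_M1 F hnonneg a b ha hmertens z hz2
      rw [hBdef]
      refine le_trans (le_of_eq ?_) this
      refine Finset.sum_congr rfl (fun q _ => ?_)
      rw [hwdef]; ring
    have step5 : (∑ q ∈ Q, w q * Real.log q) * Pz ≤ (a * Real.log z + B) * Pz :=
      mul_le_mul_of_nonneg_right step4 hPz0
    linarith
  have hhalf : a * Real.log z + B ≤ Real.log t / 2 := by
    have h1 : a * Real.log z ≤ Real.log t / 4 := by
      have hprod : 0 ≤ (v - 4*a) * Real.log z :=
        mul_nonneg (by nlinarith) (by linarith)
      nlinarith [hlogzv]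
    have h2 : B ≤ Real.log t / 4 := by linarith
    linarith
  have hSout_nonneg : 0 ≤ Sout :=
    Finset.sum_nonneg (fun A _ => Finset.prod_nonneg (fun p _ => hw p))
  have hSout_le : Sout ≤ Pz / 2 := by
    have h1 : Real.log t * Sout ≤ (Real.log t / 2) * Pz :=
      hSout.trans (mul_le_mul_of_nonneg_right hhalf hPz0)
    nlinarith
  have hSin_ge : Pz / 2 ≤ Sin := by linarith
  -- compare Pz with Pt
  have hPt_le : ∏ p ∈ (Finset.Icc 1 ⌊t⌋₊).filter Nat.Prime, (1 + F p / p)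
      ≤ Pz * Real.exp (v * (a + 1)) := by
    have h := FI_Psplit F hnonneg a b hmertens t z hz2 hzt
    have hexp : (a * Real.log (t / z) + b) / Real.log z ≤ v * (a + 1) := by
      rw [div_le_iff₀ (by linarith : (0:ℝ) < Real.log z)]
      have hltz : Real.log (t / z) ≤ Real.log t := by
        rw [Real.log_div (by linarith) (by linarith)]
        linarith
      have hbt : b ≤ Real.log t / 4 := by linarith
      have hva : v * (a + 1) * Real.log z = (a + 1) * (v * Real.log z) := by ring
      rw [hva, hlogzv]
      nlinarith [mul_le_mul_of_nonneg_left hltz ha]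
    calc ∏ p ∈ (Finset.Icc 1 ⌊t⌋₊).filter Nat.Prime, (1 + F p / p)
        ≤ Pz * Real.exp ((a * Real.log (t / z) + b) / Real.log z) := h
      _ ≤ Pz * Real.exp (v * (a + 1)) :=
          mul_le_mul_of_nonneg_left (Real.exp_le_exp.2 hexp) hPz0
  have hexp_pos : 0 < Real.exp (v * (a + 1)) := Real.exp_pos _
  have final : (1/2) * Real.exp (-(v * (a + 1))) *
      ∏ p ∈ (Finset.Icc 1 ⌊t⌋₊).filter Nat.Prime, (1 + F p / p) ≤ Sin := by
    have h1 : Real.exp (-(v * (a + 1))) *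
        (∏ p ∈ (Finset.Icc 1 ⌊t⌋₊).filter Nat.Prime, (1 + F p / p)) ≤ Pz := by
      rw [Real.exp_neg]
      rw [inv_mul_le_iff₀ hexp_pos]
      linarith [hPt_le]
    linarith [hSin_ge, h1]
  exact final.trans hSin_le

set_option maxHeartbeats 4000000 in
theorem friedlander_iwaniec_lower_bound
    (F : ℕ → ℝ)
    (hmult1 : F 1 = 1)
    (hmult : ∀ m n : ℕ, Nat.Coprime m n → F (m * n) = F m * F n)
    (hnonneg : ∀ n, 0 ≤ F n)
    (hsupp : ∀ n : ℕ, ¬ Squarefree n → F n = 0)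
    (a b : ℝ) (ha : 0 ≤ a) (hb : 1 ≤ b)
    (hmertens : ∀ x y : ℝ, 2 ≤ y → y ≤ x →
      ∑ p ∈ (Finset.Icc 1 ⌊x⌋₊).filter (fun p : ℕ => p.Prime ∧ y < (p : ℝ)),
        F p * Real.log p / p ≤ a * Real.log (x / y) + b)
    (c : ℝ) (hc : 0 < c)
    (hcheby : ∀ᶠ y : ℝ in atTop,
      c * y ≤ ∑ p ∈ (Finset.Icc 1 ⌊y⌋₊).filter Nat.Prime, F p * Real.log p) :
    ∃ C : ℝ, 0 < C ∧ ∀ x : ℝ, 2 ≤ x →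
      C * (x / Real.log x) *
          ∏ p ∈ (Finset.Icc 1 ⌊x⌋₊).filter Nat.Prime, (1 + F p / p) ≤
        ∑ n ∈ Finset.Icc 1 ⌊x⌋₊, F n := by
  obtain ⟨B, hBdef⟩ : ∃ B : ℝ, B = b + F 2 * Real.log 2 / 2 := ⟨_, rfl⟩
  have hlog2 : 0 < Real.log 2 := Real.log_pos (by norm_num)
  have hlog2' : (1:ℝ)/2 ≤ Real.log 2 := by
    have := Real.log_two_gt_d9; linarith
  have hF2 : 0 ≤ F 2 * Real.log 2 / 2 :=
    div_nonneg (mul_nonneg (hnonneg 2) hlog2.le) (by norm_num)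
  have hB1 : 1 ≤ B := by rw [hBdef]; linarith
  have M1 : ∀ u : ℝ, 2 ≤ u →
      ∑ p ∈ (Finset.Icc 1 ⌊u⌋₊).filter Nat.Prime, F p * Real.log p / p
        ≤ a * Real.log u + B := by
    intro u hu; rw [hBdef]; exact FI_M1 F hnonneg a b ha hmertens u hu
  obtain ⟨δ, t₀, hδ, ht₀2, hFL⟩ := FI_FL F hmult1 hmult hnonneg hsupp a b ha hb hmertens
  obtain ⟨y₀, hy₀⟩ := Filter.eventually_atTop.1 hcheby
  obtain ⟨δ₁, hδ₁def⟩ : ∃ δ₁ : ℝ, δ₁ = δ * Real.exp (-(2*a + 2*b)) := ⟨_, rfl⟩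
  have hδ₁ : 0 < δ₁ := by rw [hδ₁def]; positivity
  obtain ⟨K, hKdef⟩ : ∃ K : ℝ, K = c * δ₁ / 2 := ⟨_, rfl⟩
  have hK : 0 < K := by rw [hKdef]; positivity
  have hwnn : ∀ p : ℕ, (0:ℝ) ≤ F p / p := fun p => div_nonneg (hnonneg p) (Nat.cast_nonneg p)
  have hPnn : ∀ u : ℝ, (0:ℝ) ≤ ∏ p ∈ (Finset.Icc 1 ⌊u⌋₊).filter Nat.Prime, (1 + F p / p) :=
    fun u => Finset.prod_nonneg (fun p _ => by have := hwnn p; linarith)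
  have hprodge1 : ∀ s : Finset ℕ, (1:ℝ) ≤ ∏ p ∈ s, (1 + F p / p) := by
    intro s
    have h := Finset.prod_le_prod (f := fun _ : ℕ => (1:ℝ)) (g := fun p : ℕ => 1 + F p / p)
      (s := s) (fun i _ => by norm_num) (fun i _ => by show (1:ℝ) ≤ 1 + F i / i; linarith [hwnn i])
    simpa using h
  have hP1 : ∀ u : ℝ, (1:ℝ) ≤ ∏ p ∈ (Finset.Icc 1 ⌊u⌋₊).filter Nat.Prime, (1 + F p / p) :=
    fun u => hprodge1 _
  have hPmono : ∀ u w : ℝ, u ≤ w →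
      (∏ p ∈ (Finset.Icc 1 ⌊u⌋₊).filter Nat.Prime, (1 + F p / p))
        ≤ ∏ p ∈ (Finset.Icc 1 ⌊w⌋₊).filter Nat.Prime, (1 + F p / p) := by
    intro u w huw
    have hsub : (Finset.Icc 1 ⌊u⌋₊).filter Nat.Prime ⊆ (Finset.Icc 1 ⌊w⌋₊).filter Nat.Prime :=
      Finset.filter_subset_filter _ (Finset.Icc_subset_Icc_right (Nat.floor_le_floor huw))
    have hps := Finset.prod_sdiff (f := fun p : ℕ => 1 + F p / (p:ℝ)) hsub
    have h1 := hprodge1 (((Finset.Icc 1 ⌊w⌋₊).filter Nat.Prime) \ ((Finset.Icc 1 ⌊u⌋₊).filter Nat.Prime))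
    have h0 : (0:ℝ) ≤ ∏ p ∈ (Finset.Icc 1 ⌊u⌋₊).filter Nat.Prime, (1 + F p / p) :=
      Finset.prod_nonneg (fun p _ => by have := hwnn p; linarith)
    nlinarith [hps, h1, h0]
  -- eventual conditions
  have hRtend : Filter.Tendsto (fun x : ℝ => x ^ ((1:ℝ)/3)) atTop atTop :=
    tendsto_rpow_atTop (by norm_num)
  have hcond1 : ∀ᶠ R : ℝ in atTop, a * Real.log R + B ≤ K * R := by
    have hlo := Real.isLittleO_log_id_atTop
    have h1 := hlo.def (show (0:ℝ) < K/(2*(a+1)) by positivity)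
    filter_upwards [h1, eventually_ge_atTop (2*B/K), eventually_ge_atTop (1:ℝ)]
      with R hR1 hR2 hR3
    have hlogRnn : 0 ≤ Real.log R := Real.log_nonneg hR3
    simp only [Real.norm_eq_abs, id_eq] at hR1
    rw [abs_of_nonneg hlogRnn, abs_of_nonneg (by linarith : (0:ℝ) ≤ R)] at hR1
    have e1 : a * Real.log R ≤ (K/2) * R := by
      have h := mul_le_mul_of_nonneg_left hR1 ha
      have hq0 : (0:ℝ) ≤ K/(2*(a+1)) := by positivity
      have hq : K/(2*(a+1)) * (2*(a+1)) = K := div_mul_cancel₀ K (by positivity)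
      have h0R : (0:ℝ) ≤ R := by linarith
      have h5 : a * (K/(2*(a+1)) * R) ≤ (K/2) * R := by
        nlinarith [mul_nonneg hq0 h0R, hq]
      linarith
    have e2 : B ≤ (K/2) * R := by
      have h6 := (div_le_iff₀ hK).1 hR2
      linarith
    linarith
  have hev : ∀ᶠ x : ℝ in atTop, 2 ≤ x ∧ 2 ≤ x ^ ((1:ℝ)/3) ∧ t₀ ≤ x ^ ((1:ℝ)/3)
      ∧ y₀ ≤ x ^ ((1:ℝ)/3)
      ∧ a * Real.log (x ^ ((1:ℝ)/3)) + B ≤ K * x ^ ((1:ℝ)/3) := by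
    filter_upwards [eventually_ge_atTop (2:ℝ), hRtend.eventually (eventually_ge_atTop (2:ℝ)),
      hRtend.eventually (eventually_ge_atTop t₀), hRtend.eventually (eventually_ge_atTop y₀),
      hRtend.eventually hcond1] with x h1 h2 h3 h4 h5
    exact ⟨h1, h2, h3, h4, h5⟩
  obtain ⟨x₂, hx₂⟩ := Filter.eventually_atTop.1 hev
  -- main estimate for large x
  have hbig : ∀ x : ℝ, x₂ ≤ x →
      K * (x / Real.log x) * ∏ p ∈ (Finset.Icc 1 ⌊x⌋₊).filter Nat.Prime, (1 + F p / p)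
        ≤ ∑ n ∈ Finset.Icc 1 ⌊x⌋₊, F n := by
    intro x hx
    obtain ⟨hx2, hR2, hRt₀, hRy₀, hcond⟩ := hx₂ x hx
    set R := x ^ ((1:ℝ)/3) with hRdef
    set N := ⌊x⌋₊ with hNdef
    set M := ⌊R⌋₊ with hMdef
    have hx0 : (0:ℝ) < x := by linarith
    have hR0 : (0:ℝ) < R := by linarith
    have hlogx : 0 < Real.log x := Real.log_pos (by linarith)
    have hlogR : Real.log R = Real.log x / 3 := by
      rw [hRdef, Real.log_rpow hx0]; ring
    have hlogR2 : Real.log 2 ≤ Real.log R := Real.log_le_log (by norm_num) hR2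
    have hR3 : R * (R * R) = x := by
      have : R ^ (3:ℕ) = x := by
        rw [hRdef, ← Real.rpow_natCast (x ^ ((1:ℝ)/3)) 3, ← Real.rpow_mul hx0.le]
        norm_num
      nlinarith [this]
    have hRx : R ≤ x := by nlinarith
    have hMN : M ≤ N := Nat.floor_le_floor hRx
    have hcastM : (M:ℝ) ≤ R := Nat.floor_le hR0.le
    -- Step A
    have stepA : ∑ n ∈ Finset.Icc 1 N, F n * Real.log n
        ≤ (∑ n ∈ Finset.Icc 1 N, F n) * Real.log x := by
      rw [Finset.sum_mul]
      refine Finset.sum_le_sum (fun n hn => ?_)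
      rw [Finset.mem_Icc] at hn
      have hn1 : 1 ≤ n := hn.1
      have hnx : (n:ℝ) ≤ x := le_trans (Nat.cast_le.2 hn.2) (Nat.floor_le hx0.le)
      have : Real.log n ≤ Real.log x :=
        Real.log_le_log (by exact_mod_cast hn1) hnx
      exact mul_le_mul_of_nonneg_left this (hnonneg n)
    -- Step C : lower bound for inner sums
    have stepC : ∀ m ∈ Finset.Icc 1 M,
        c * (x / m) - R * (a * Real.log R + B)
          ≤ ∑ p ∈ (Finset.Icc 1 N).filter (fun p => p.Prime ∧ p * m ≤ N ∧ ¬ p ∣ m),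
              F p * Real.log p := by
      intro m hm
      rw [Finset.mem_Icc] at hm
      have hm1 : 1 ≤ m := hm.1
      have hm0 : (0:ℝ) < m := by exact_mod_cast hm1
      have hmR : (m:ℝ) ≤ R := le_trans (Nat.cast_le.2 hm.2) hcastM
      have hxmR : x / R ≤ x / m := by gcongr
      have hxR : x / R = R * R := by
        field_simp
        nlinarith [hR3]
      have hy₀xm : y₀ ≤ x / m := by
        have h1 : R ≤ R * R := by nlinarith
        rw [hxR] at hxmR
        linarith
      have hcheb := hy₀ (x/m) hy₀xm
      have hset : (Finset.Icc 1 ⌊x/m⌋₊).filter Nat.Prime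
          = (Finset.Icc 1 N).filter (fun p => p.Prime ∧ p * m ≤ N) := by
        ext p
        simp only [Finset.mem_filter, Finset.mem_Icc]
        constructor
        · rintro ⟨⟨hp1, hpfl⟩, hpp⟩
          have hpxm : (p:ℝ) ≤ x / m :=
            le_trans (Nat.cast_le.2 hpfl) (Nat.floor_le (by positivity))
          have hpmx : (p:ℝ) * m ≤ x := (le_div_iff₀ hm0).1 hpxm
          have hpmN : p * m ≤ N := by
            rw [hNdef]
            exact Nat.le_floor (by push_cast; linarith)
          have hpN : p ≤ N := le_trans (Nat.le_mul_of_pos_right p hm1) hpmN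
          exact ⟨⟨hp1, hpN⟩, hpp, hpmN⟩
        · rintro ⟨⟨hp1, hpN⟩, hpp, hpmN⟩
          have hpmx : ((p * m : ℕ) : ℝ) ≤ x := by
            rw [hNdef] at hpmN
            exact le_trans (Nat.cast_le.2 hpmN) (Nat.floor_le hx0.le)
          have hpfl : p ≤ ⌊x/m⌋₊ := by
            refine Nat.le_floor ?_
            rw [le_div_iff₀ hm0]
            push_cast at hpmx ⊢
            linarith
          exact ⟨⟨hp1, hpfl⟩, hpp⟩
      rw [hset] at hcheb
      have hWsplit := Finset.sum_filter_add_sum_filter_not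
        ((Finset.Icc 1 N).filter (fun p => p.Prime ∧ p * m ≤ N))
        (fun p => ¬ p ∣ m) (fun p => F p * Real.log p)
      have hseteq : ((Finset.Icc 1 N).filter (fun p => p.Prime ∧ p * m ≤ N)).filter
            (fun p => ¬ p ∣ m)
          = (Finset.Icc 1 N).filter (fun p => p.Prime ∧ p * m ≤ N ∧ ¬ p ∣ m) := by
        rw [Finset.filter_filter]
        apply Finset.filter_congr
        intro p _
        tauto
      have hdvdbound : ∑ p ∈ ((Finset.Icc 1 N).filter
            (fun p => p.Prime ∧ p * m ≤ N)).filter (fun p => ¬ ¬ p ∣ m),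
            F p * Real.log p ≤ R * (a * Real.log R + B) := by
        have hsub : ((Finset.Icc 1 N).filter (fun p => p.Prime ∧ p * m ≤ N)).filter
              (fun p => ¬ ¬ p ∣ m) ⊆ (Finset.Icc 1 M).filter Nat.Prime := by
          intro p hp
          simp only [Finset.mem_filter, Finset.mem_Icc, not_not] at hp
          obtain ⟨⟨⟨hp1, hpN⟩, hpp, hpmN⟩, hpdvd⟩ := hp
          have hpm : p ≤ m := Nat.le_of_dvd hm1 hpdvd
          exact Finset.mem_filter.2 ⟨Finset.mem_Icc.2 ⟨hp1, le_trans hpm hm.2⟩, hpp⟩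
        have h1 : ∑ p ∈ ((Finset.Icc 1 N).filter (fun p => p.Prime ∧ p * m ≤ N)).filter
              (fun p => ¬ ¬ p ∣ m), F p * Real.log p
            ≤ ∑ p ∈ (Finset.Icc 1 M).filter Nat.Prime, F p * Real.log p :=
          Finset.sum_le_sum_of_subset_of_nonneg hsub (fun p _ _ =>
            mul_nonneg (hnonneg p) (Real.log_natCast_nonneg p))
        have h2 : ∑ p ∈ (Finset.Icc 1 M).filter Nat.Prime, F p * Real.log p
            ≤ R * ∑ p ∈ (Finset.Icc 1 M).filter Nat.Prime, F p * Real.log p / p := by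
          rw [Finset.mul_sum]
          refine Finset.sum_le_sum (fun p hp => ?_)
          rw [Finset.mem_filter, Finset.mem_Icc] at hp
          have hp0 : (0:ℝ) < p := by exact_mod_cast hp.2.pos
          have hpR : (p:ℝ) ≤ R := le_trans (Nat.cast_le.2 hp.1.2) hcastM
          have hnn : 0 ≤ F p * Real.log p / p :=
            div_nonneg (mul_nonneg (hnonneg p) (Real.log_natCast_nonneg p)) hp0.le
          calc F p * Real.log p = (p:ℝ) * (F p * Real.log p / p) := by field_simp
            _ ≤ R * (F p * Real.log p / p) := mul_le_mul_of_nonneg_right hpR hnn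
        have h3 : ∑ p ∈ (Finset.Icc 1 M).filter Nat.Prime, F p * Real.log p / p
            ≤ a * Real.log R + B := M1 R hR2
        calc ∑ p ∈ ((Finset.Icc 1 N).filter (fun p => p.Prime ∧ p * m ≤ N)).filter
              (fun p => ¬ ¬ p ∣ m), F p * Real.log p
            ≤ R * ∑ p ∈ (Finset.Icc 1 M).filter Nat.Prime, F p * Real.log p / p :=
              h1.trans h2
          _ ≤ R * (a * Real.log R + B) := mul_le_mul_of_nonneg_left h3 hR0.le
      rw [hseteq] at hWsplit
      linarith [hcheb, hdvdbound, hWsplit]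
    -- Step D + assemble
    have stepD : c * x * (∑ m ∈ Finset.Icc 1 M, F m / m)
        - R * (a * Real.log R + B) * (∑ m ∈ Finset.Icc 1 M, F m)
        ≤ ∑ m ∈ Finset.Icc 1 M, F m *
            (∑ p ∈ (Finset.Icc 1 N).filter (fun p => p.Prime ∧ p * m ≤ N ∧ ¬ p ∣ m),
              F p * Real.log p) := by
      have h1 : ∀ m ∈ Finset.Icc 1 M,
          F m * (c * (x / m) - R * (a * Real.log R + B))
            ≤ F m * (∑ p ∈ (Finset.Icc 1 N).filter
                (fun p => p.Prime ∧ p * m ≤ N ∧ ¬ p ∣ m), F p * Real.log p) :=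
        fun m hm => mul_le_mul_of_nonneg_left (stepC m hm) (hnonneg m)
      have h2 : ∑ m ∈ Finset.Icc 1 M, F m * (c * (x / m) - R * (a * Real.log R + B))
          = c * x * (∑ m ∈ Finset.Icc 1 M, F m / m)
            - R * (a * Real.log R + B) * (∑ m ∈ Finset.Icc 1 M, F m) := by
        rw [Finset.mul_sum, Finset.mul_sum, ← Finset.sum_sub_distrib]
        refine Finset.sum_congr rfl (fun m _ => by ring)
      calc c * x * (∑ m ∈ Finset.Icc 1 M, F m / m)
            - R * (a * Real.log R + B) * (∑ m ∈ Finset.Icc 1 M, F m)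
          = ∑ m ∈ Finset.Icc 1 M, F m * (c * (x / m) - R * (a * Real.log R + B)) := h2.symm
        _ ≤ _ := Finset.sum_le_sum h1
    -- bounds on T_R, S_R
    have hTP : ∑ m ∈ Finset.Icc 1 M, F m / m
        ≤ ∏ p ∈ (Finset.Icc 1 N).filter Nat.Prime, (1 + F p / p) := by
      refine FI_T_le_P F hmult1 hmult hnonneg hsupp
        (fun p hp => (Finset.mem_filter.1 hp).2) ?_
      intro n hn hsf p hp
      rw [Finset.mem_Icc] at hn
      have hpp := Nat.prime_of_mem_primeFactors hp
      have hpn : p ≤ n := Nat.le_of_dvd hn.1 (Nat.dvd_of_mem_primeFactors hp)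
      exact Finset.mem_filter.2 ⟨Finset.mem_Icc.2 ⟨hpp.one_lt.le, le_trans hpn
        (le_trans hn.2 hMN)⟩, hpp⟩
    have hSR : ∑ m ∈ Finset.Icc 1 M, F m ≤ R * ∑ m ∈ Finset.Icc 1 M, F m / m := by
      rw [Finset.mul_sum]
      refine Finset.sum_le_sum (fun m hm => ?_)
      rw [Finset.mem_Icc] at hm
      have hm0 : (0:ℝ) < m := by exact_mod_cast hm.1
      have hmR : (m:ℝ) ≤ R := le_trans (Nat.cast_le.2 hm.2) hcastM
      calc F m = (m:ℝ) * (F m / m) := by field_simp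
        _ ≤ R * (F m / m) := mul_le_mul_of_nonneg_right hmR (hwnn m)
    have hTnn : 0 ≤ ∑ m ∈ Finset.Icc 1 M, F m / m :=
      Finset.sum_nonneg (fun m _ => hwnn m)
    -- error bound
    have hEB : R * (a * Real.log R + B) * (∑ m ∈ Finset.Icc 1 M, F m)
        ≤ K * x * ∏ p ∈ (Finset.Icc 1 N).filter Nat.Prime, (1 + F p / p) := by
      have h1 : R * (a * Real.log R + B) ≤ R * (K * R) :=
        mul_le_mul_of_nonneg_left hcond hR0.le
      have h2 : ∑ m ∈ Finset.Icc 1 M, F m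
          ≤ R * ∏ p ∈ (Finset.Icc 1 N).filter Nat.Prime, (1 + F p / p) :=
        hSR.trans (mul_le_mul_of_nonneg_left hTP hR0.le)
      have hSnn : 0 ≤ ∑ m ∈ Finset.Icc 1 M, F m :=
        Finset.sum_nonneg (fun m _ => hnonneg m)
      have haB : 0 ≤ a * Real.log R + B := by
        have := Real.log_natCast_nonneg 2
        nlinarith [mul_nonneg ha (Real.log_nonneg (by linarith : (1:ℝ) ≤ R))]
      calc R * (a * Real.log R + B) * (∑ m ∈ Finset.Icc 1 M, F m)
          ≤ R * (K * R) * (R * ∏ p ∈ (Finset.Icc 1 N).filter Nat.Prime, (1 + F p / p)) := by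
            refine mul_le_mul h1 h2 hSnn ?_
            positivity
        _ = K * (R * (R * R)) * ∏ p ∈ (Finset.Icc 1 N).filter Nat.Prime, (1 + F p / p) := by
            ring
        _ = K * x * ∏ p ∈ (Finset.Icc 1 N).filter Nat.Prime, (1 + F p / p) := by
            rw [hR3]
    -- T_R lower bound via FL and Psplit
    have hTlow : δ₁ * ∏ p ∈ (Finset.Icc 1 N).filter Nat.Prime, (1 + F p / p)
        ≤ ∑ m ∈ Finset.Icc 1 M, F m / m := by
      have hFLR := hFL R hRt₀
      have hPs := FI_Psplit F hnonneg a b hmertens x R hR2 hRx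
      have hexp : (a * Real.log (x / R) + b) / Real.log R ≤ 2*a + 2*b := by
        have hlxR : Real.log (x / R) = 2 * Real.log R := by
          rw [Real.log_div (by linarith) (by linarith), hlogR]; ring
        rw [hlxR, div_le_iff₀ (by linarith : (0:ℝ) < Real.log R)]
        nlinarith [mul_nonneg ha (hlog2.le.trans hlogR2), hlogR2, hlog2']
      have hPR := hPnn R
      have h2 : ∏ p ∈ (Finset.Icc 1 N).filter Nat.Prime, (1 + F p / p)
          ≤ (∏ p ∈ (Finset.Icc 1 M).filter Nat.Prime, (1 + F p / p))
            * Real.exp (2*a + 2*b) := by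
        refine hPs.trans ?_
        exact mul_le_mul_of_nonneg_left (Real.exp_le_exp.2 hexp) (hPnn R)
      have h3 : δ₁ * ∏ p ∈ (Finset.Icc 1 N).filter Nat.Prime, (1 + F p / p)
          ≤ δ * ∏ p ∈ (Finset.Icc 1 M).filter Nat.Prime, (1 + F p / p) := by
        rw [hδ₁def]
        have := mul_le_mul_of_nonneg_left h2
          (by positivity : (0:ℝ) ≤ δ * Real.exp (-(2*a + 2*b)))
        calc δ * Real.exp (-(2*a + 2*b)) *
              ∏ p ∈ (Finset.Icc 1 N).filter Nat.Prime, (1 + F p / p)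
            ≤ δ * Real.exp (-(2*a + 2*b)) *
              ((∏ p ∈ (Finset.Icc 1 M).filter Nat.Prime, (1 + F p / p))
                * Real.exp (2*a + 2*b)) := this
          _ = δ * ∏ p ∈ (Finset.Icc 1 M).filter Nat.Prime, (1 + F p / p) := by
              rw [Real.exp_neg]
              field_simp
        -- done
      exact h3.trans hFLR
    -- final assembly
    have hchain : K * x * ∏ p ∈ (Finset.Icc 1 N).filter Nat.Prime, (1 + F p / p)
        ≤ (∑ n ∈ Finset.Icc 1 N, F n) * Real.log x := by
      have hcx : 0 ≤ c * x := by positivity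
      have h1 : c * x * (δ₁ * ∏ p ∈ (Finset.Icc 1 N).filter Nat.Prime, (1 + F p / p))
          ≤ c * x * ∑ m ∈ Finset.Icc 1 M, F m / m :=
        mul_le_mul_of_nonneg_left hTlow hcx
      have hKc : c * δ₁ = 2 * K := by rw [hKdef]; ring
      have h2 := FI_pair F hmult hnonneg hsupp (N := N) (M := M)
      nlinarith [stepD, stepA, hEB, h2,
        mul_nonneg hcx hTnn, hPnn x]
    have hrw : K * (x / Real.log x) * ∏ p ∈ (Finset.Icc 1 N).filter Nat.Prime, (1 + F p / p)
        = (K * x * ∏ p ∈ (Finset.Icc 1 N).filter Nat.Prime, (1 + F p / p)) / Real.log x := by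
      ring
    rw [hrw, div_le_iff₀ hlogx]
    exact hchain
  -- small x and conclusion
  obtain ⟨X, hXdef⟩ : ∃ X : ℝ, X = max x₂ 2 := ⟨_, rfl⟩
  have hX2 : 2 ≤ X := hXdef ▸ le_max_right _ _
  have hXx₂ : x₂ ≤ X := hXdef ▸ le_max_left _ _
  have hX0 : 0 < X := by linarith
  have hPX1 : (1:ℝ) ≤ ∏ p ∈ (Finset.Icc 1 ⌊X⌋₊).filter Nat.Prime, (1 + F p / p) := hP1 X
  have hPX0 : (0:ℝ) < ∏ p ∈ (Finset.Icc 1 ⌊X⌋₊).filter Nat.Prime, (1 + F p / p) := by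
    linarith
  refine ⟨min K (Real.log 2 /
      (X * ∏ p ∈ (Finset.Icc 1 ⌊X⌋₊).filter Nat.Prime, (1 + F p / p))),
    lt_min hK (by positivity), ?_⟩
  intro x hx
  have hlogx : 0 < Real.log x := Real.log_pos (by linarith)
  have hxlnn : 0 ≤ x / Real.log x := by positivity
  by_cases hcase : X ≤ x
  · have h1 := hbig x (le_trans hXx₂ hcase)
    have h2 : min K (Real.log 2 /
          (X * ∏ p ∈ (Finset.Icc 1 ⌊X⌋₊).filter Nat.Prime, (1 + F p / p)))
        * (x / Real.log x) * ∏ p ∈ (Finset.Icc 1 ⌊x⌋₊).filter Nat.Prime, (1 + F p / p)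
        ≤ K * (x / Real.log x) * ∏ p ∈ (Finset.Icc 1 ⌊x⌋₊).filter Nat.Prime, (1 + F p / p) := by
      refine mul_le_mul_of_nonneg_right (mul_le_mul_of_nonneg_right (min_le_left _ _) hxlnn)
        (hPnn x)
    exact h2.trans h1
  · push_neg at hcase
    have hxX : x ≤ X := hcase.le
    have hsum1 : (1:ℝ) ≤ ∑ n ∈ Finset.Icc 1 ⌊x⌋₊, F n := by
      have h1mem : 1 ∈ Finset.Icc 1 ⌊x⌋₊ := by
        rw [Finset.mem_Icc]
        exact ⟨le_refl 1, Nat.le_floor (by push_cast; linarith)⟩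
      have := Finset.single_le_sum (f := F) (fun n _ => hnonneg n) h1mem
      rw [hmult1] at this
      exact this
    have hxl : x / Real.log x ≤ X / Real.log 2 := by
      refine div_le_div₀ hX0.le hxX hlog2 (Real.log_le_log (by norm_num) ?_)
      linarith
    have hPxX : ∏ p ∈ (Finset.Icc 1 ⌊x⌋₊).filter Nat.Prime, (1 + F p / p)
        ≤ ∏ p ∈ (Finset.Icc 1 ⌊X⌋₊).filter Nat.Prime, (1 + F p / p) := hPmono x X hxX
    have hCle : min K (Real.log 2 /
          (X * ∏ p ∈ (Finset.Icc 1 ⌊X⌋₊).filter Nat.Prime, (1 + F p / p)))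
        ≤ Real.log 2 /
          (X * ∏ p ∈ (Finset.Icc 1 ⌊X⌋₊).filter Nat.Prime, (1 + F p / p)) := min_le_right _ _
    have hCnn : 0 ≤ min K (Real.log 2 /
          (X * ∏ p ∈ (Finset.Icc 1 ⌊X⌋₊).filter Nat.Prime, (1 + F p / p))) :=
      le_min hK.le (by positivity)
    have hprod : min K (Real.log 2 /
          (X * ∏ p ∈ (Finset.Icc 1 ⌊X⌋₊).filter Nat.Prime, (1 + F p / p)))
        * (x / Real.log x) * ∏ p ∈ (Finset.Icc 1 ⌊x⌋₊).filter Nat.Prime, (1 + F p / p)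
        ≤ (Real.log 2 /
            (X * ∏ p ∈ (Finset.Icc 1 ⌊X⌋₊).filter Nat.Prime, (1 + F p / p)))
          * (X / Real.log 2) * ∏ p ∈ (Finset.Icc 1 ⌊X⌋₊).filter Nat.Prime, (1 + F p / p) := by
      have h1 : 0 ≤ X / Real.log 2 := by positivity
      refine mul_le_mul (mul_le_mul hCle hxl hxlnn (by positivity)) hPxX (hPnn x) ?_
      positivity
    have heq : (Real.log 2 /
            (X * ∏ p ∈ (Finset.Icc 1 ⌊X⌋₊).filter Nat.Prime, (1 + F p / p)))
          * (X / Real.log 2) * ∏ p ∈ (Finset.Icc 1 ⌊X⌋₊).filter Nat.Prime, (1 + F p / p)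
        = 1 := by
      field_simp
    linarith [hprod, heq ▸ hprod]
end
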